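/- arXiv:2307.03542 — 7 statements merged into one kernel-verified Lean document; each statement's English description precedes it below -/
import Mathlib

section
/- Let q be a prime power, let n ≥ 2, and let B be a nondegenerate alternating bilinear form on 𝔽_q^{2n+2}, defining the symplectic polar space W(2n+1,q). Let 𝒪 be an m-ovoid of W(2n+1,q) with m ≥ 1, and let W be a 2n-dimensional vector subspace of 𝔽_q^{2n+2} on which B restricts to a nondegenerate alternating form (a W(2n−1,q) section). Let c be the number of projective points of the 2-dimensional subspace W^⊥ that belong to 𝒪; then 0 ≤ c ≤ q+1 and the number of projective points of W belonging to 𝒪 equals (m−c)q^{n−1}+m. -/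
open Module Set

/-- The projective points of `PG(V)`: one-dimensional subspaces of `V`. -/
def ProjPoints (F V : Type) [Field F] [AddCommGroup V] [Module F V] :
    Set (Submodule F V) :=
  {p | ∃ v : V, v ≠ 0 ∧ p = Submodule.span F {v}}

/-- A subspace `W` is totally isotropic for the bilinear form `B`. -/
def TotallyIsotropic {F V : Type} [Field F] [AddCommGroup V] [Module F V]
    (B : LinearMap.BilinForm F V) (W : Submodule F V) : Prop :=
  ∀ v ∈ W, ∀ w ∈ W, B v w = 0

/-- A generator of the symplectic polar space defined by `B`: a totally isotropic
subspace of maximal vector dimension. -/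
def IsSympGenerator {F V : Type} [Field F] [AddCommGroup V] [Module F V]
    (B : LinearMap.BilinForm F V) (G : Submodule F V) : Prop :=
  TotallyIsotropic B G ∧
    ∀ G' : Submodule F V, TotallyIsotropic B G' →
      Module.finrank F G' ≤ Module.finrank F G

/-- An `m`-ovoid of the symplectic polar space defined by `B`: a set of projective
points such that every generator contains exactly `m` of them. -/
def IsSympMOvoid {F V : Type} [Field F] [AddCommGroup V] [Module F V]
    (B : LinearMap.BilinForm F V) (m : ℕ) (O : Set (Submodule F V)) : Prop :=
  O ⊆ ProjPoints F V ∧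
    ∀ G : Submodule F V, IsSympGenerator B G → (O ∩ {p | p ≤ G}).ncard = m

/-!
Write `V = W ⊕ W^⊥`. Products of two symplectic transvections act transitively on the nonzero
vectors of a nondegenerate subspace `U`, so the number `d_U` of Lagrangians of `U` through a
nonzero vector is constant, and double counting incident (point, Lagrangian) pairs gives
`|Lag U| = (q^k + 1) d_U` when `dim U = 2k`; in the same way an `m`-ovoid has
`m (q^(n+1) + 1)` points. For Lagrangians `G` of `W` and `P` of `W^⊥`, `G ⊕ P` is a generator,
and `⟨w + u⟩ ≤ G ⊕ P` iff `w ∈ G` and `u ∈ P`. Counting the incidences between points of the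
ovoid and such pairs `(G, P)` in two ways gives `|𝒪 ∩ W| q + |𝒪 ∩ W^⊥| q^n = m (q + q^n)`.
-/

namespace SymplecticPolarSpace

theorem ncard_mul_eq_sum_ncard {α β : Type*} [Finite α] (r : α → β → Prop) {s : Set α}
    {t : Finset β} {m : ℕ} (hs : ∀ a ∈ s, {b ∈ (t : Set β) | r a b}.ncard = m) :
    s.ncard * m = ∑ b ∈ t, {a ∈ s | r a b}.ncard := by
  classical
  obtain ⟨s, rfl⟩ := s.toFinite.exists_finset_coe
  have h := Finset.sum_card_bipartiteAbove_eq_sum_card_bipartiteBelow r (s := s) (t := t)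
  simp only [Finset.bipartiteAbove, Finset.bipartiteBelow, ← Set.ncard_coe_finset,
    Finset.coe_filter] at h
  rw [Set.ncard_coe_finset, ← Finset.sum_const_nat fun a ha => hs a ha]
  exact h

theorem ncard_mul_eq_ncard_mul {α β : Type*} [Finite α] [Finite β] (r : α → β → Prop)
    {s : Set α} {t : Set β} {m n : ℕ} (hs : ∀ a ∈ s, {b ∈ t | r a b}.ncard = m)
    (ht : ∀ b ∈ t, {a ∈ s | r a b}.ncard = n) : s.ncard * m = t.ncard * n := by
  obtain ⟨t, rfl⟩ := t.toFinite.exists_finset_coe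
  rw [ncard_mul_eq_sum_ncard r hs, Finset.sum_congr rfl ht, Finset.sum_const, smul_eq_mul,
    Set.ncard_coe_finset]

variable {F V : Type} [Field F] [AddCommGroup V] [Module F V] {B : LinearMap.BilinForm F V}

theorem ne_bot_of_mem_projPoints {p : Submodule F V} (hp : p ∈ ProjPoints F V) : p ≠ ⊥ := by
  obtain ⟨v, hv, rfl⟩ := hp
  exact Submodule.span_singleton_eq_bot.not.2 hv

theorem mem_orthogonal_iff_of_isAlt (hB : B.IsAlt) {N : Submodule F V} {x : V} :
    x ∈ B.orthogonal N ↔ ∀ n ∈ N, B x n = 0 :=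
  forall₂_congr fun _ _ => hB.isRefl.eq_iff

theorem totallyIsotropic_sup_span_singleton (hB : B.IsAlt) {L : Submodule F V}
    (hL : TotallyIsotropic B L) {x : V} (hx : x ∈ B.orthogonal L) :
    TotallyIsotropic B (L ⊔ F ∙ x) := by
  have hxL : ∀ l ∈ L, B x l = 0 := (mem_orthogonal_iff_of_isAlt hB).1 hx
  rintro _ hv _ hw
  obtain ⟨l, hl, _, hy, rfl⟩ := Submodule.mem_sup.1 hv
  obtain ⟨l', hl', _, hy', rfl⟩ := Submodule.mem_sup.1 hw
  obtain ⟨a, rfl⟩ := Submodule.mem_span_singleton.1 hy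
  obtain ⟨b, rfl⟩ := Submodule.mem_span_singleton.1 hy'
  simp [hL l hl l' hl', hx l hl, hxL l' hl', hB x]

def lagrangians (B : LinearMap.BilinForm F V) (U : Submodule F V) : Set (Submodule F V) :=
  {L | L ≤ U ∧ TotallyIsotropic B L ∧ 2 * finrank F L = finrank F U}

noncomputable def lagrangianDegree (B : LinearMap.BilinForm F V) (U : Submodule F V) (x : V) : ℕ :=
  {L ∈ lagrangians B U | x ∈ L}.ncard

theorem lagrangianDegree_zero (U : Submodule F V) :
    lagrangianDegree B U 0 = (lagrangians B U).ncard := by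
  simp [lagrangianDegree]

theorem transvection_isometry (hB : B.IsAlt) (a : V) (c : F) (x y : V) :
    B (LinearMap.transvection (c • B.flip a) a x) (LinearMap.transvection (c • B.flip a) a y) =
      B x y := by
  simp only [LinearMap.transvection.apply, LinearMap.smul_apply, LinearMap.BilinForm.flip_apply,
    smul_eq_mul, map_add, map_smul, LinearMap.add_apply, hB a]
  rw [← LinearMap.IsAlt.neg hB y a]
  ring

theorem exists_isometry_apply_eq_of_apply_ne_zero (hB : B.IsAlt) {U : Submodule F V} {u v : V}
    (hu : u ∈ U) (hv : v ∈ U) (huv : B u v ≠ 0) :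
    ∃ f : V →ₗ[F] V, (∀ x y, B (f x) (f y) = B x y) ∧ (∀ x, f x - x ∈ U) ∧ f u = v := by
  refine ⟨LinearMap.transvection ((B u v)⁻¹ • B.flip (v - u)) (v - u),
    transvection_isometry hB _ _, fun x => ?_, ?_⟩
  · rw [LinearMap.transvection.apply, add_sub_cancel_left]
    exact U.smul_mem _ (U.sub_mem hv hu)
  · rw [LinearMap.transvection.apply, LinearMap.smul_apply, LinearMap.BilinForm.flip_apply,
      map_sub, hB u, sub_zero, smul_eq_mul, inv_mul_cancel₀ huv, one_smul, add_sub_cancel]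

theorem exists_isometry_apply_eq (hB : B.IsAlt) {U : Submodule F V}
    (hU : Disjoint U (B.orthogonal U)) {u v : V} (hu : u ∈ U) (hu0 : u ≠ 0) (hv : v ∈ U)
    (hv0 : v ≠ 0) :
    ∃ f : V →ₗ[F] V, (∀ x y, B (f x) (f y) = B x y) ∧ (∀ x, f x - x ∈ U) ∧ f u = v := by
  have hUnd : ∀ x ∈ U, x ≠ 0 → ∃ y ∈ U, B x y ≠ 0 := fun x hx hx0 => by
    by_contra! h
    exact hx0 (hU.le_bot ⟨hx, (mem_orthogonal_iff_of_isAlt hB).2 h⟩)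
  obtain ⟨w, hw, huw, hvw⟩ : ∃ w ∈ U, B u w ≠ 0 ∧ B w v ≠ 0 := by
    obtain ⟨w₁, hw₁, huw₁⟩ := hUnd u hu hu0
    obtain ⟨w₂, hw₂, hvw₂⟩ := hUnd v hv hv0
    simp only [← LinearMap.IsAlt.neg hB v, neg_ne_zero]
    by_cases h₁ : B v w₁ = 0
    · by_cases h₂ : B u w₂ = 0
      · exact ⟨w₁ + w₂, U.add_mem hw₁ hw₂, by simpa [h₂], by simpa [h₁] using hvw₂⟩
      · exact ⟨w₂, hw₂, h₂, hvw₂⟩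
    · exact ⟨w₁, hw₁, huw₁, h₁⟩
  obtain ⟨f, hfB, hfU, hfu⟩ := exists_isometry_apply_eq_of_apply_ne_zero hB hu hw huw
  obtain ⟨g, hgB, hgU, hgw⟩ := exists_isometry_apply_eq_of_apply_ne_zero hB hw hv hvw
  refine ⟨g ∘ₗ f, fun x y => (hgB _ _).trans (hfB x y), fun x => ?_, by simp [hfu, hgw]⟩
  simpa using U.add_mem (hgU (f x)) (hfU x)

theorem add_mem_sup_iff {W W' G P : Submodule F V} (hW : Disjoint W W') (hG : G ≤ W)
    (hP : P ≤ W') {w u : V} (hw : w ∈ W) (hu : u ∈ W') : w + u ∈ G ⊔ P ↔ w ∈ G ∧ u ∈ P := by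
  refine ⟨fun h => ?_, fun h => Submodule.add_mem_sup h.1 h.2⟩
  obtain ⟨g, hg, p, hp, hgp⟩ := Submodule.mem_sup.1 h
  have hwg : w - g = p - u := by rw [sub_eq_sub_iff_add_eq_add, ← hgp, add_comm]
  have hwg0 : w - g = 0 := (Submodule.disjoint_def.1 hW) _ (W.sub_mem hw (hG hg))
    (hwg ▸ W'.sub_mem (hP hp) hu)
  rw [hwg0, eq_comm, sub_eq_zero] at hwg
  rw [sub_eq_zero] at hwg0
  exact ⟨hwg0 ▸ hg, hwg ▸ hp⟩

theorem ncard_lagrangians_prod_mem_sup {W W' : Submodule F V} (hW : Disjoint W W') {w u : V}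
    (hw : w ∈ W) (hu : u ∈ W') :
    {z ∈ lagrangians B W ×ˢ lagrangians B W' | w + u ∈ z.1 ⊔ z.2}.ncard =
      lagrangianDegree B W w * lagrangianDegree B W' u := by
  rw [lagrangianDegree, lagrangianDegree, ← Set.ncard_prod]
  congr 1
  ext ⟨G, P⟩
  simp only [Set.mem_ofPred_eq, Set.mem_prod]
  constructor
  · rintro ⟨⟨hG, hP⟩, h⟩
    obtain ⟨hwG, huP⟩ := (add_mem_sup_iff hW hG.1 hP.1 hw hu).1 h
    exact ⟨⟨hG, hwG⟩, hP, huP⟩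
  · rintro ⟨⟨hG, hwG⟩, hP, huP⟩
    exact ⟨⟨hG, hP⟩, Submodule.add_mem_sup hwG huP⟩

theorem isCompl_top_orthogonal_top (hnd : B.Nondegenerate) : IsCompl ⊤ (B.orthogonal ⊤) :=
  LinearMap.BilinForm.orthogonal_top_eq_bot hnd ▸ isCompl_top_bot

section FiniteDimensional

variable [FiniteDimensional F V] {U : Submodule F V}

theorem finrank_inf_orthogonal_add_finrank (hnd : B.Nondegenerate)
    (hU : IsCompl U (B.orthogonal U)) {G : Submodule F V} (hG : G ≤ U) :
    finrank F ↥(U ⊓ B.orthogonal G) + finrank F G = finrank F U := by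
  have hsup : U ⊔ B.orthogonal G = ⊤ :=
    top_unique (hU.sup_eq_top ▸ sup_le_sup_left (LinearMap.BilinForm.orthogonal_le hG) U)
  have h := Submodule.finrank_sup_add_finrank_inf_eq U (B.orthogonal G)
  rw [hsup, finrank_top, LinearMap.BilinForm.finrank_orthogonal hnd] at h
  have := Submodule.finrank_le G
  omega

theorem TotallyIsotropic.two_mul_finrank_le (hnd : B.Nondegenerate)
    (hU : IsCompl U (B.orthogonal U)) {G : Submodule F V} (hG : G ≤ U)
    (hti : TotallyIsotropic B G) : 2 * finrank F G ≤ finrank F U := by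
  have : G ≤ U ⊓ B.orthogonal G := le_inf hG fun v hv w hw => hti w hw v hv
  have := Submodule.finrank_mono this
  have := finrank_inf_orthogonal_add_finrank hnd hU hG
  omega

theorem exists_mem_lagrangians (hB : B.IsAlt) (hnd : B.Nondegenerate)
    (hU : IsCompl U (B.orthogonal U)) : ∃ L, L ∈ lagrangians B U := by
  obtain ⟨L, ⟨hLU, hL⟩, hmax⟩ := set_has_maximal_iff_noetherian.2 inferInstance
    {L | L ≤ U ∧ TotallyIsotropic B L} ⟨⊥, bot_le, fun v hv w _ => by simp [(Submodule.mem_bot F).1 hv]⟩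
  have hperp : U ⊓ B.orthogonal L ≤ L := fun x hx => by
    have hle : L ≤ L ⊔ F ∙ x := le_sup_left
    have hx' : L = L ⊔ F ∙ x := hle.eq_of_not_lt <| hmax _
      ⟨sup_le hLU ((Submodule.span_singleton_le_iff_mem _ _).2 hx.1),
        totallyIsotropic_sup_span_singleton hB hL hx.2⟩
    exact hx' ▸ Submodule.mem_sup_right (Submodule.mem_span_singleton_self x)
  have := Submodule.finrank_mono hperp
  have := TotallyIsotropic.two_mul_finrank_le hnd hU hLU hL
  have := finrank_inf_orthogonal_add_finrank hnd hU hLU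
  exact ⟨L, hLU, hL, by omega⟩

theorem isSympGenerator_iff (hB : B.IsAlt) (hnd : B.Nondegenerate) {G : Submodule F V} :
    IsSympGenerator B G ↔ G ∈ lagrangians B ⊤ := by
  have htop := isCompl_top_orthogonal_top hnd
  obtain ⟨L, -, hL, hLdim⟩ := exists_mem_lagrangians hB hnd htop
  constructor
  · rintro ⟨hG, hmax⟩
    have := TotallyIsotropic.two_mul_finrank_le hnd htop le_top hG
    have := hmax L hL
    exact ⟨le_top, hG, by omega⟩
  · rintro ⟨-, hG, hGdim⟩
    refine ⟨hG, fun G' hG' => ?_⟩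
    have := TotallyIsotropic.two_mul_finrank_le hnd htop le_top hG'
    omega

theorem sup_mem_lagrangians_top (hB : B.IsAlt) (hnd : B.Nondegenerate)
    (hU : IsCompl U (B.orthogonal U)) {G P : Submodule F V} (hG : G ∈ lagrangians B U)
    (hP : P ∈ lagrangians B (B.orthogonal U)) : G ⊔ P ∈ lagrangians B ⊤ := by
  refine ⟨le_top, ?_, ?_⟩
  · rintro _ hx _ hy
    obtain ⟨g, hg, p, hp, rfl⟩ := Submodule.mem_sup.1 hx
    obtain ⟨g', hg', p', hp', rfl⟩ := Submodule.mem_sup.1 hy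
    have hgp' : B g p' = 0 := hP.1 hp' g (hG.1 hg)
    have hpg' : B p g' = 0 := (mem_orthogonal_iff_of_isAlt hB).1 (hP.1 hp) g' (hG.1 hg')
    simp [hG.2.1 g hg g' hg', hP.2.1 p hp p' hp', hgp', hpg']
  · have hGP : G ⊓ P = ⊥ := eq_bot_iff.2 ((inf_le_inf hG.1 hP.1).trans hU.disjoint.le_bot)
    have h := Submodule.finrank_sup_add_finrank_inf_eq G P
    rw [hGP, finrank_bot, add_zero] at h
    have hUdim := LinearMap.BilinForm.finrank_orthogonal hnd U
    have := Submodule.finrank_le U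
    rw [finrank_top, h]
    have := hG.2.2
    have := hP.2.2
    omega

theorem isCompl_orthogonal_orthogonal (hB : B.IsAlt) (hnd : B.Nondegenerate)
    (hU : IsCompl U (B.orthogonal U)) :
    IsCompl (B.orthogonal U) (B.orthogonal (B.orthogonal U)) := by
  rw [LinearMap.BilinForm.orthogonal_orthogonal hnd hB.isRefl]
  exact hU.symm

end FiniteDimensional

section Finite

variable [Finite V]

theorem ncard_points_le_mul_add_one (U : Submodule F V) :
    (ProjPoints F V ∩ {p | p ≤ U}).ncard * (Nat.card F - 1) + 1 = Nat.card F ^ finrank F U := by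
  have hrange : ProjPoints F V ∩ {p | p ≤ U} =
      Set.range fun p : Projectivization F U => p.submodule.map U.subtype := by
    ext p
    constructor
    · rintro ⟨⟨v, hv, rfl⟩, hle⟩
      have hvU : v ∈ U := hle (Submodule.mem_span_singleton_self v)
      refine ⟨Projectivization.mk F ⟨v, hvU⟩ (by simpa using hv), ?_⟩
      simp [Submodule.map_span]
    · rintro ⟨p, rfl⟩
      induction p using Projectivization.ind with
      | h u hu =>
        refine ⟨⟨u, by simpa using hu, by simp [Submodule.map_span]⟩, ?_⟩
        exact Submodule.map_subtype_le U _
  have hinj : Function.Injective fun p : Projectivization F U => p.submodule.map U.subtype :=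
    (Submodule.map_injective_of_injective U.injective_subtype).comp
      Projectivization.submodule_injective
  rw [hrange, Set.ncard_range_of_injective hinj, ← Module.natCard_eq_pow_finrank,
    Projectivization.card' F U]

theorem lagrangianDegree_le (hB : B.IsAlt) (hnd : B.Nondegenerate) {U : Submodule F V}
    (hU : Disjoint U (B.orthogonal U)) {u v : V} (hu : u ∈ U) (hu0 : u ≠ 0) (hv : v ∈ U)
    (hv0 : v ≠ 0) : lagrangianDegree B U u ≤ lagrangianDegree B U v := by
  obtain ⟨f, hfB, hfU, hfu⟩ := exists_isometry_apply_eq hB hU hu hu0 hv hv0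
  have hf : Function.Injective f := by
    rw [← LinearMap.ker_eq_bot, eq_bot_iff]
    intro x hx
    exact hnd.1 x fun y => by rw [← hfB, LinearMap.mem_ker.1 hx, map_zero, LinearMap.zero_apply]
  refine Set.ncard_le_ncard_of_injOn (Submodule.map f) ?_
    (Submodule.map_injective_of_injective hf).injOn
  rintro L ⟨⟨hLU, hL, hLdim⟩, huL⟩
  refine ⟨⟨?_, ?_, ?_⟩, hfu ▸ Submodule.mem_map_of_mem huL⟩
  · rintro _ ⟨x, hx, rfl⟩
    simpa using U.add_mem (hfU x) (hLU hx)
  · rintro _ ⟨x, hx, rfl⟩ _ ⟨y, hy, rfl⟩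
    rw [hfB]
    exact hL x hx y hy
  · rw [← hLdim, LinearEquiv.finrank_eq (Submodule.equivMapOfInjective f hf L)]

theorem lagrangianDegree_eq (hB : B.IsAlt) (hnd : B.Nondegenerate) {U : Submodule F V}
    (hU : Disjoint U (B.orthogonal U)) {u v : V} (hu : u ∈ U) (hu0 : u ≠ 0) (hv : v ∈ U)
    (hv0 : v ≠ 0) : lagrangianDegree B U u = lagrangianDegree B U v :=
  (lagrangianDegree_le hB hnd hU hu hu0 hv hv0).antisymm (lagrangianDegree_le hB hnd hU hv hv0 hu hu0)

theorem ncard_lagrangians_ge_eq_lagrangianDegree (hB : B.IsAlt) (hnd : B.Nondegenerate)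
    {U : Submodule F V} (hU : Disjoint U (B.orthogonal U)) {u : V} (hu : u ∈ U) (hu0 : u ≠ 0)
    {p : Submodule F V} (hp : p ∈ ProjPoints F V) (hpU : p ≤ U) :
    {L ∈ lagrangians B U | p ≤ L}.ncard = lagrangianDegree B U u := by
  obtain ⟨x, hx0, rfl⟩ := hp
  simp only [Submodule.span_singleton_le_iff_mem]
  exact lagrangianDegree_eq hB hnd hU (hpU (Submodule.mem_span_singleton_self x)) hx0 hu hu0

theorem lagrangianDegree_pos (hB : B.IsAlt) (hnd : B.Nondegenerate) {U : Submodule F V}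
    (hU : IsCompl U (B.orthogonal U)) {u : V} (hu : u ∈ U) (hu0 : u ≠ 0) :
    0 < lagrangianDegree B U u := by
  obtain ⟨L, hL⟩ := exists_mem_lagrangians hB hnd hU
  have hUdim : finrank F U ≠ 0 :=
    Submodule.finrank_eq_zero.not.2 ((Submodule.ne_bot_iff U).2 ⟨u, hu, hu0⟩)
  obtain ⟨v, hv, hv0⟩ := Submodule.exists_mem_ne_zero_of_ne_bot fun h : L = ⊥ => by
    have := hL.2.2
    rw [h, finrank_bot] at this
    omega
  rw [lagrangianDegree_eq hB hnd hU.disjoint hu hu0 (hL.1 hv) hv0]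
  exact (Set.ncard_pos).2 ⟨L, hL, hv⟩

theorem ncard_points_of_finrank_eq_two [Finite F] {U : Submodule F V} (hU : finrank F U = 2) :
    (ProjPoints F V ∩ {p | p ≤ U}).ncard = Nat.card F + 1 := by
  have h := ncard_points_le_mul_add_one U
  have hq : 1 < Nat.card F := Finite.one_lt_card
  rw [hU, sq] at h
  refine Nat.eq_of_mul_eq_mul_right (by omega : 0 < Nat.card F - 1) ?_
  zify [hq.le] at h ⊢
  linear_combination h

theorem ncard_points_of_mem_lagrangians {U L : Submodule F V} {k : ℕ}
    (hk : finrank F U = 2 * k) (hL : L ∈ lagrangians B U) :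
    (ProjPoints F V ∩ {p | p ≤ L}).ncard * (Nat.card F - 1) + 1 = Nat.card F ^ k := by
  rw [ncard_points_le_mul_add_one, (by have := hL.2.2; omega : finrank F L = k)]

theorem ncard_points_eq_mul_of_mem_lagrangians [Finite F] {U L : Submodule F V} {k : ℕ}
    (hk : finrank F U = 2 * k) (hL : L ∈ lagrangians B U) :
    (ProjPoints F V ∩ {p | p ≤ U}).ncard =
      (ProjPoints F V ∩ {p | p ≤ L}).ncard * (Nat.card F ^ k + 1) := by
  have hU := ncard_points_le_mul_add_one U
  have hL := ncard_points_of_mem_lagrangians hk hL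
  rw [hk, pow_mul', ← hL] at hU
  rw [← hL]
  have hq : 1 < Nat.card F := Finite.one_lt_card
  refine Nat.eq_of_mul_eq_mul_right (by omega : 0 < Nat.card F - 1) ?_
  linear_combination hU

theorem ncard_lagrangians_eq [Finite F] (hB : B.IsAlt) (hnd : B.Nondegenerate)
    {U : Submodule F V} (hU : IsCompl U (B.orthogonal U)) {k : ℕ} (hk : finrank F U = 2 * k)
    {u : V} (hu : u ∈ U) (hu0 : u ≠ 0) :
    (lagrangians B U).ncard = (Nat.card F ^ k + 1) * lagrangianDegree B U u := by
  obtain ⟨L₀, hL₀⟩ := exists_mem_lagrangians hB hnd hU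
  have hq : 1 < Nat.card F := Finite.one_lt_card
  have hpoints : ∀ L ∈ lagrangians B U, {p ∈ ProjPoints F V ∩ {p | p ≤ U} | p ≤ L}.ncard =
      (ProjPoints F V ∩ {p | p ≤ L₀}).ncard := fun L hL => by
    have hL' : {p ∈ ProjPoints F V ∩ {p | p ≤ U} | p ≤ L} = ProjPoints F V ∩ {p | p ≤ L} :=
      Set.ext fun p => ⟨fun ⟨⟨hp, _⟩, hpL⟩ => ⟨hp, hpL⟩,
        fun ⟨hp, hpL⟩ => ⟨⟨hp, hpL.trans hL.1⟩, hpL⟩⟩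
    have h := (ncard_points_of_mem_lagrangians hk hL).trans
      (ncard_points_of_mem_lagrangians hk hL₀).symm
    rw [hL']
    exact Nat.eq_of_mul_eq_mul_right (by omega) (Nat.add_right_cancel h)
  have hcount := ncard_mul_eq_ncard_mul (fun L p => p ≤ L) hpoints fun p hp =>
    ncard_lagrangians_ge_eq_lagrangianDegree hB hnd hU.disjoint hu hu0 hp.1 hp.2
  rw [ncard_points_eq_mul_of_mem_lagrangians hk hL₀] at hcount
  have hk0 : k ≠ 0 := by
    rintro rfl
    exact (Submodule.ne_bot_iff U).2 ⟨u, hu, hu0⟩ (Submodule.finrank_eq_zero.1 hk)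
  have ha0 : (ProjPoints F V ∩ {p | p ≤ L₀}).ncard ≠ 0 := fun h => by
    have hL₀pts := ncard_points_of_mem_lagrangians hk hL₀
    rw [h, zero_mul, zero_add] at hL₀pts
    have := Nat.le_self_pow hk0 (Nat.card F)
    omega
  refine Nat.eq_of_mul_eq_mul_left (Nat.pos_of_ne_zero ha0) ?_
  linear_combination hcount

theorem IsSympMOvoid.ncard_eq [Finite F] (hB : B.IsAlt) (hnd : B.Nondegenerate) {m : ℕ}
    {O : Set (Submodule F V)} (hO : IsSympMOvoid B m O) {k : ℕ} (hk : finrank F V = 2 * k)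
    (hk0 : k ≠ 0) : O.ncard = m * (Nat.card F ^ k + 1) := by
  obtain ⟨u, hu0⟩ := Module.finrank_pos_iff_exists_ne_zero.1 (by omega : 0 < finrank F V)
  have htop := isCompl_top_orthogonal_top hnd
  have hk' : finrank F (⊤ : Submodule F V) = 2 * k := by rw [finrank_top, hk]
  have hcount := ncard_mul_eq_ncard_mul (fun L p => p ≤ L)
    (fun L hL => hO.2 L ((isSympGenerator_iff hB hnd).2 hL)) fun p hp =>
      ncard_lagrangians_ge_eq_lagrangianDegree hB hnd htop.disjoint Submodule.mem_top hu0
        (hO.1 hp) le_top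
  rw [ncard_lagrangians_eq hB hnd htop hk' Submodule.mem_top hu0] at hcount
  have hd := lagrangianDegree_pos hB hnd htop Submodule.mem_top hu0
  exact Nat.eq_of_mul_eq_mul_right hd (by linear_combination hcount.symm)

open Classical in
theorem ncard_lagrangians_prod_le_sup (hB : B.IsAlt) (hnd : B.Nondegenerate)
    {W : Submodule F V} (hW : IsCompl W (B.orthogonal W)) {w₀ u₀ : V} (hw₀ : w₀ ∈ W)
    (hw₀0 : w₀ ≠ 0) (hu₀ : u₀ ∈ B.orthogonal W) (hu₀0 : u₀ ≠ 0) {Q : Submodule F V}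
    (hQ : Q ∈ ProjPoints F V) :
    {z ∈ lagrangians B W ×ˢ lagrangians B (B.orthogonal W) | Q ≤ z.1 ⊔ z.2}.ncard =
      (if Q ≤ B.orthogonal W then (lagrangians B W).ncard else lagrangianDegree B W w₀) *
      (if Q ≤ W then (lagrangians B (B.orthogonal W)).ncard
        else lagrangianDegree B (B.orthogonal W) u₀) := by
  obtain ⟨x, hx0, rfl⟩ := hQ
  obtain ⟨w, hw, u, hu, rfl⟩ :=
    Submodule.mem_sup.1 (hW.sup_eq_top.symm ▸ Submodule.mem_top : x ∈ W ⊔ B.orthogonal W)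
  have hdisj := Submodule.disjoint_def.1 hW.disjoint
  have hwu : w + u ∈ B.orthogonal W ↔ w = 0 := by
    rw [Submodule.add_mem_iff_left _ hu]
    exact ⟨hdisj w hw, fun h => h ▸ Submodule.zero_mem _⟩
  have huw : w + u ∈ W ↔ u = 0 := by
    rw [Submodule.add_mem_iff_right _ hw]
    exact ⟨fun h => hdisj u h hu, fun h => h ▸ Submodule.zero_mem _⟩
  simp only [Submodule.span_singleton_le_iff_mem, hwu, huw]
  rw [ncard_lagrangians_prod_mem_sup hW.disjoint hw hu]
  congr 1
  · split_ifs with h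
    · rw [h, lagrangianDegree_zero]
    · exact lagrangianDegree_eq hB hnd hW.disjoint hw h hw₀ hw₀0
  · split_ifs with h
    · rw [h, lagrangianDegree_zero]
    · exact lagrangianDegree_eq hB hnd (isCompl_orthogonal_orthogonal hB hnd hW).disjoint hu h
        hu₀ hu₀0

theorem sum_ncard_lagrangians_prod_le_sup [Finite F] (hB : B.IsAlt) (hnd : B.Nondegenerate)
    {W : Submodule F V} (hW : IsCompl W (B.orthogonal W)) {a b : ℕ}
    (ha : finrank F (B.orthogonal W) = 2 * a) (hb : finrank F W = 2 * b) {w₀ u₀ : V}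
    (hw₀ : w₀ ∈ W) (hw₀0 : w₀ ≠ 0) (hu₀ : u₀ ∈ B.orthogonal W) (hu₀0 : u₀ ≠ 0)
    {S : Finset (Submodule F V)} (hS : ∀ Q ∈ S, Q ∈ ProjPoints F V) :
    ∑ Q ∈ S, {z ∈ lagrangians B W ×ˢ lagrangians B (B.orthogonal W) | Q ≤ z.1 ⊔ z.2}.ncard =
      lagrangianDegree B W w₀ * lagrangianDegree B (B.orthogonal W) u₀ *
        (S.card + (↑S ∩ {p | p ≤ W}).ncard * Nat.card F ^ a +
          (↑S ∩ {p | p ≤ B.orthogonal W}).ncard * Nat.card F ^ b) := by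
  classical
  rw [Finset.sum_congr rfl fun Q hQ =>
      ncard_lagrangians_prod_le_sup hB hnd hW hw₀ hw₀0 hu₀ hu₀0 (hS Q hQ),
    ncard_lagrangians_eq hB hnd hW hb hw₀ hw₀0,
    ncard_lagrangians_eq hB hnd (isCompl_orthogonal_orthogonal hB hnd hW) ha hu₀ hu₀0]
  have hpoint : ∀ Q ∈ S,
      (if Q ≤ B.orthogonal W then (Nat.card F ^ b + 1) * lagrangianDegree B W w₀
          else lagrangianDegree B W w₀) *
        (if Q ≤ W then (Nat.card F ^ a + 1) * lagrangianDegree B (B.orthogonal W) u₀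
          else lagrangianDegree B (B.orthogonal W) u₀) =
      lagrangianDegree B W w₀ * lagrangianDegree B (B.orthogonal W) u₀ *
        (1 + (if Q ≤ W then Nat.card F ^ a else 0) +
          (if Q ≤ B.orthogonal W then Nat.card F ^ b else 0)) := by
    intro Q hQ
    have hQ' : ¬ (Q ≤ W ∧ Q ≤ B.orthogonal W) := fun h =>
      ne_bot_of_mem_projPoints (hS Q hQ) (le_bot_iff.1 (hW.disjoint h.1 h.2))
    by_cases hQW : Q ≤ W <;> by_cases hQW' : Q ≤ B.orthogonal W <;> simp_all <;> ring
  have hcard : ∀ U : Submodule F V, (↑S ∩ {p | p ≤ U}).ncard = (S.filter (· ≤ U)).card :=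
    fun U => by rw [← Set.ncard_coe_finset, Finset.coe_filter]; rfl
  rw [Finset.sum_congr rfl hpoint, ← Finset.mul_sum, hcard, hcard]
  simp only [Finset.sum_add_distrib, Finset.sum_const, Finset.sum_ite, smul_eq_mul, mul_one,
    mul_zero, add_zero]

theorem IsSympMOvoid.ncard_inter_mul_pow_add [Finite F] (hB : B.IsAlt) (hnd : B.Nondegenerate)
    {m : ℕ} {O : Set (Submodule F V)} (hO : IsSympMOvoid B m O) {W : Submodule F V}
    (hW : IsCompl W (B.orthogonal W)) {a b : ℕ} (ha : finrank F (B.orthogonal W) = 2 * a)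
    (hb : finrank F W = 2 * b) (ha0 : a ≠ 0) (hb0 : b ≠ 0) :
    (O ∩ {p | p ≤ W}).ncard * Nat.card F ^ a +
        (O ∩ {p | p ≤ B.orthogonal W}).ncard * Nat.card F ^ b =
      m * (Nat.card F ^ a + Nat.card F ^ b) := by
  obtain ⟨w₀, hw₀, hw₀0⟩ := (Submodule.ne_bot_iff W).1 fun h => hb0 (by
    rw [h, finrank_bot] at hb; omega)
  obtain ⟨u₀, hu₀, hu₀0⟩ := (Submodule.ne_bot_iff (B.orthogonal W)).1 fun h => ha0 (by
    rw [h, finrank_bot] at ha; omega)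
  have hV : finrank F V = 2 * (a + b) := by
    have := LinearMap.BilinForm.finrank_orthogonal hnd W
    have := Submodule.finrank_le W
    omega
  have hOcard := IsSympMOvoid.ncard_eq hB hnd hO hV (by omega)
  obtain ⟨S, rfl⟩ := O.toFinite.exists_finset_coe
  have hcount := ncard_mul_eq_sum_ncard (s := lagrangians B W ×ˢ lagrangians B (B.orthogonal W))
    (t := S) (m := m) (fun z Q => Q ≤ z.1 ⊔ z.2) fun z hz => by
      rw [← Set.inter_ofPred_eq_sep]
      exact hO.2 _ ((isSympGenerator_iff hB hnd).2 (sup_mem_lagrangians_top hB hnd hW hz.1 hz.2))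
  rw [Set.ncard_prod, sum_ncard_lagrangians_prod_le_sup hB hnd hW ha hb hw₀ hw₀0 hu₀ hu₀0 hO.1,
    ncard_lagrangians_eq hB hnd hW hb hw₀ hw₀0,
    ncard_lagrangians_eq hB hnd (isCompl_orthogonal_orthogonal hB hnd hW) ha hu₀ hu₀0,
    ← Set.ncard_coe_finset, hOcard, pow_add] at hcount
  have hd := Nat.mul_pos (lagrangianDegree_pos hB hnd hW hw₀ hw₀0)
    (lagrangianDegree_pos hB hnd (isCompl_orthogonal_orthogonal hB hnd hW) hu₀ hu₀0)
  refine Nat.add_left_cancel (n := m * (Nat.card F ^ a * Nat.card F ^ b + 1))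
    (Nat.eq_of_mul_eq_mul_left hd ?_)
  linear_combination hcount.symm

end Finite

end SymplecticPolarSpace

open SymplecticPolarSpace in
theorem mOvoid_symplectic_intersection_pattern_general
    {q n m : ℕ} (hn : 2 ≤ n)
    {F : Type} [Field F] [Fintype F] (hcard : Fintype.card F = q)
    (B : LinearMap.BilinForm F (Fin (2 * n + 2) → F))
    (halt : ∀ v : Fin (2 * n + 2) → F, B v v = 0)
    (hnd : ∀ v : Fin (2 * n + 2) → F, (∀ w, B v w = 0) → v = 0)
    (O : Set (Submodule F (Fin (2 * n + 2) → F)))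
    (hO : IsSympMOvoid B m O)
    (W : Submodule F (Fin (2 * n + 2) → F))
    (hWdim : Module.finrank F W = 2 * n)
    (hWnd : ∀ v ∈ W, (∀ w ∈ W, B v w = 0) → v = 0) :
    (O ∩ {p | p ≤ B.orthogonal W}).ncard ≤ q + 1 ∧
      ((O ∩ {p | p ≤ W}).ncard : ℤ) =
        ((m : ℤ) - ((O ∩ {p | p ≤ B.orthogonal W}).ncard : ℤ)) * (q : ℤ) ^ (n - 1)
          + (m : ℤ) := by
  have hB : B.IsAlt := halt
  have hBnd : B.Nondegenerate := hB.isRefl.nondegenerate_iff_separatingLeft.2 hnd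
  have hW : IsCompl W (B.orthogonal W) :=
    (LinearMap.BilinForm.isCompl_orthogonal_iff_disjoint hB.isRefl).2 <|
      Submodule.disjoint_def.2 fun v hvW hvW' =>
        hWnd v hvW ((mem_orthogonal_iff_of_isAlt hB).1 hvW')
  have hW' : finrank F (B.orthogonal W) = 2 * 1 := by
    rw [LinearMap.BilinForm.finrank_orthogonal hBnd, Module.finrank_fin_fun, hWdim]
    omega
  have hq : Nat.card F = q := Nat.card_eq_fintype_card.trans hcard
  have key := IsSympMOvoid.ncard_inter_mul_pow_add hB hBnd hO hW hW' hWdim one_ne_zero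
    (by omega)
  have hline := ncard_points_of_finrank_eq_two (V := Fin (2 * n + 2) → F) hW'
  rw [hq] at key hline
  refine ⟨hline ▸ Set.ncard_le_ncard (Set.inter_subset_inter_left _ hO.1), ?_⟩
  obtain ⟨k, rfl⟩ : ∃ k, n = k + 1 := ⟨n - 1, by omega⟩
  have hq0 : (q : ℤ) ≠ 0 := Nat.cast_ne_zero.2 (hcard ▸ Fintype.card_ne_zero)
  have keyZ := congrArg (Nat.cast : ℕ → ℤ) key
  push_cast at keyZ
  refine mul_left_cancel₀ hq0 ?_
  rw [Nat.add_sub_cancel]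
  linear_combination keyZ

/-- Intersection pattern of an `m`-ovoid of `W(2n+1,q)` with an embedded `W(2n-1,q)`:
if `c` is the number of its points in `W^⊥`, then `0 ≤ c ≤ q+1` and the number of its
points in `W` is `(m-c)q^(n-1)+m`. -/
theorem mOvoid_symplectic_intersection_pattern
    {q n m : ℕ} (hqpp : IsPrimePow q) (hn : 2 ≤ n)
    {F : Type} [Field F] [Fintype F] (hcard : Fintype.card F = q)
    (B : LinearMap.BilinForm F (Fin (2 * n + 2) → F))
    (halt : ∀ v : Fin (2 * n + 2) → F, B v v = 0)
    (hnd : ∀ v : Fin (2 * n + 2) → F, (∀ w, B v w = 0) → v = 0)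
    (O : Set (Submodule F (Fin (2 * n + 2) → F)))
    (hm : 1 ≤ m)
    (hO : IsSympMOvoid B m O)
    (W : Submodule F (Fin (2 * n + 2) → F))
    (hWdim : Module.finrank F W = 2 * n)
    (hWnd : ∀ v ∈ W, (∀ w ∈ W, B v w = 0) → v = 0) :
    (O ∩ {p | p ≤ B.orthogonal W}).ncard ≤ q + 1 ∧
      ((O ∩ {p | p ≤ W}).ncard : ℤ) =
        ((m : ℤ) - ((O ∩ {p | p ≤ B.orthogonal W}).ncard : ℤ)) * (q : ℤ) ^ (n - 1)
          + (m : ℤ) :=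
  mOvoid_symplectic_intersection_pattern_general hn hcard B halt hnd O hO W hWdim hWnd
end

section
/- Let q be a prime power, let n ≥ 2, and let B be a nondegenerate alternating bilinear form on 𝔽_q^{2n+2}, defining the symplectic polar space W(2n+1,q). Let 𝒪 be an m-ovoid of W(2n+1,q) with m ≥ 1 and (n,m) ≠ (2, q²+1). Let W be a 2n-dimensional vector subspace of 𝔽_q^{2n+2} on which B restricts to a nondegenerate alternating form. If every projective point of W belongs to 𝒪, then 𝒪 consists of all projective points of PG(2n+1,q). -/
/-!
Let `𝒪' = PG(2n+1,q) \ 𝒪`; it is an `m'`-ovoid with `m' = θ_{n+1} - m`, where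
`θ_d = 1 + q + ⋯ + q^{d-1}` is the number of points of a `d`-space. Double counting incidences
with generators gives `|𝒪'| = (q^{n+1}+1) m'` and `|𝒪' ∩ P^⊥| = (q^n+1) m'` for every point
`P ∉ 𝒪'`. Counting the pairs `(P, p)` with `P` a point of `W`, `p ∈ 𝒪'` and `p ⊥ P` then gives
`s q^{n-1} = m' (q^{n-1}+1)`, where `s ≤ q+1` is the number of points of `𝒪'` on the line `W^⊥`.
As `q^{n-1}` and `q^{n-1}+1` are coprime, either `m' = 0`, so that `𝒪` contains every point,
or `n = 2` and `m' = q`, that is `m = q^2+1`.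
-/

open Module Set

theorem Set.Finite.sum_ncard_sep_eq_sum_ncard_sep {α β : Type*} {s : Set α} {t : Set β}
    (hs : s.Finite) (ht : t.Finite) (r : α → β → Prop) :
    ∑ a ∈ hs.toFinset, {b ∈ t | r a b}.ncard = ∑ b ∈ ht.toFinset, {a ∈ s | r a b}.ncard := by
  classical
  simpa only [← Set.ncard_coe_finset, Finset.coe_bipartiteAbove, Finset.coe_bipartiteBelow,
    Set.Finite.mem_toFinset] using
    Finset.sum_card_bipartiteAbove_eq_sum_card_bipartiteBelow (s := hs.toFinset)
      (t := ht.toFinset) r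

theorem Set.Finite.ncard_mul_eq_ncard_mul {α β : Type*} {s : Set α} {t : Set β}
    (hs : s.Finite) (ht : t.Finite) (r : α → β → Prop) {m n : ℕ}
    (hm : ∀ a ∈ s, {b ∈ t | r a b}.ncard = m) (hn : ∀ b ∈ t, {a ∈ s | r a b}.ncard = n) :
    s.ncard * m = t.ncard * n := by
  have h := hs.sum_ncard_sep_eq_sum_ncard_sep ht r
  rwa [Finset.sum_const_nat fun a ha => hm a (hs.mem_toFinset.1 ha),
    Finset.sum_const_nat fun b hb => hn b (ht.mem_toFinset.1 hb),
    ← ncard_eq_toFinset_card s hs, ← ncard_eq_toFinset_card t ht] at h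

theorem geom_sum_range_two_mul {R : Type*} [CommSemiring R] (x : R) (d : ℕ) :
    ∑ i ∈ Finset.range (2 * d), x ^ i = (∑ i ∈ Finset.range d, x ^ i) * (x ^ d + 1) := by
  simp only [two_mul, Finset.sum_range_add, pow_add, ← Finset.mul_sum]
  ring

section Projective

variable {F V : Type} [Field F] [AddCommGroup V] [Module F V]

theorem mem_projPoints_iff [FiniteDimensional F V] {p : Submodule F V} :
    p ∈ ProjPoints F V ↔ finrank F p = 1 := by
  constructor
  · rintro ⟨v, hv, rfl⟩
    exact finrank_span_singleton hv
  · intro hp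
    obtain ⟨v, hvp, hv⟩ := Submodule.exists_mem_ne_zero_of_ne_bot
      (Submodule.one_le_finrank_iff.1 hp.ge)
    refine ⟨v, hv, (Submodule.eq_of_le_of_finrank_le ?_ ?_).symm⟩
    · exact (Submodule.span_singleton_le_iff_mem v p).2 hvp
    · rw [hp, finrank_span_singleton hv]

theorem LinearMap.BilinForm.IsRefl.le_orthogonal_comm {B : LinearMap.BilinForm F V}
    (hB : B.IsRefl) {N L : Submodule F V} : N ≤ B.orthogonal L ↔ L ≤ B.orthogonal N :=
  ⟨fun h _ hx _ hy => hB _ _ (h hy _ hx), fun h _ hx _ hy => hB _ _ (h hy _ hx)⟩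

theorem Submodule.finrank_inf_add_one_of_not_le [FiniteDimensional F V] {W H : Submodule F V}
    (hH : finrank F H + 1 = finrank F V) (hW : ¬W ≤ H) : finrank F ↥(W ⊓ H) + 1 = finrank F W := by
  have hlt : finrank F H < finrank F ↥(W ⊔ H) :=
    Submodule.finrank_lt_finrank_of_lt (lt_of_le_of_ne le_sup_right fun h => hW (h ▸ le_sup_left))
  have := Submodule.finrank_le (W ⊔ H)
  have := Submodule.finrank_sup_add_finrank_inf_eq W H
  omega

theorem Submodule.sup_span_singleton_eq_of_finrank_eq_succ [FiniteDimensional F V]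
    {U U' : Submodule F V} (hUU' : U ≤ U') (h : finrank F U' = finrank F U + 1) {v : V}
    (hv : v ∈ U') (hvU : v ∉ U) : U ⊔ F ∙ v = U' :=
  Submodule.eq_of_le_of_finrank_le (sup_le hUU' ((span_singleton_le_iff_mem v U').2 hv))
    (by rw [finrank_sup_span_singleton hvU, h])

theorem Submodule.ncard_coe [FiniteDimensional F V] (U : Submodule F V) :
    (U : Set V).ncard = Nat.card F ^ finrank F U := by
  rw [← Nat.card_coe_set_eq]
  exact Module.natCard_eq_pow_finrank (V := U)

end Projective

section FiniteField

variable {F V : Type} [Field F] [Finite F] [AddCommGroup V] [Module F V] [FiniteDimensional F V]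

instance : Finite (Submodule F V) :=
  have := Module.finite_of_finite F (M := V)
  Finite.of_injective _ SetLike.coe_injective

theorem ncard_setOf_le_le_finrank_eq_succ {U T : Submodule F V} (hUT : U ≤ T) {d : ℕ}
    (hd : finrank F T = finrank F U + d) :
    {U' : Submodule F V | U ≤ U' ∧ U' ≤ T ∧ finrank F U' = finrank F U + 1}.ncard
      = ∑ i ∈ Finset.range d, Nat.card F ^ i := by
  have := Module.finite_of_finite F (M := V)
  set q := Nat.card F
  set r := finrank F U
  have hq : 1 < q := Finite.one_lt_card
  have hcount := (toFinite ((T : Set V) \ U)).ncard_mul_eq_ncard_mul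
    (toFinite {U' : Submodule F V | U ≤ U' ∧ U' ≤ T ∧ finrank F U' = r + 1})
    (fun v U' => v ∈ U') (m := 1) (n := q ^ (r + 1) - q ^ r) ?rows ?cols
  case rows =>
    rintro v ⟨hvT, hvU⟩
    refine ncard_eq_one.2 ⟨U ⊔ F ∙ v, ?_⟩
    ext U'
    constructor
    · rintro ⟨⟨hUU', -, hU'⟩, hv⟩
      exact (Submodule.sup_span_singleton_eq_of_finrank_eq_succ hUU' hU' hv hvU).symm
    · rintro rfl
      exact ⟨⟨le_sup_left, sup_le hUT ((Submodule.span_singleton_le_iff_mem v T).2 hvT),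
        Submodule.finrank_sup_span_singleton hvU⟩,
        Submodule.mem_sup_right (Submodule.mem_span_singleton_self v)⟩
  case cols =>
    rintro U' ⟨hUU', hU'T, hU'⟩
    have : {v ∈ (T : Set V) \ U | v ∈ U'} = (U' : Set V) \ U := by
      ext v
      exact ⟨fun h => ⟨h.2, h.1.2⟩, fun h => ⟨⟨hU'T h.1, h.2⟩, h.1⟩⟩
    rw [this, ncard_sdiff (show (U : Set V) ⊆ U' from hUU'), Submodule.ncard_coe,
      Submodule.ncard_coe, hU']
  rw [mul_one, ncard_sdiff (show (U : Set V) ⊆ T from hUT), Submodule.ncard_coe,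
    Submodule.ncard_coe, hd] at hcount
  have hgeom : (∑ i ∈ Finset.range d, q ^ i) * (q ^ (r + 1) - q ^ r) = q ^ (r + d) - q ^ r := by
    rw [pow_succ, ← Nat.mul_sub_one, pow_add, ← Nat.mul_sub_one (q ^ r), mul_left_comm,
      geom_sum_mul_of_one_le hq.le]
  refine Nat.eq_of_mul_eq_mul_right (Nat.sub_pos_of_lt ?_) (hcount.symm.trans hgeom.symm)
  exact Nat.pow_lt_pow_right hq (Nat.lt_succ_self r)

theorem ncard_projPoints_inter_setOf_le (U : Submodule F V) :
    (ProjPoints F V ∩ {p | p ≤ U}).ncard = ∑ i ∈ Finset.range (finrank F U), Nat.card F ^ i := by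
  have : ProjPoints F V ∩ {p | p ≤ U}
      = {p | ⊥ ≤ p ∧ p ≤ U ∧ finrank F p = finrank F (⊥ : Submodule F V) + 1} := by
    ext p
    simp [mem_projPoints_iff, and_comm]
  rw [this, ncard_setOf_le_le_finrank_eq_succ bot_le (d := finrank F U) (by simp)]

end FiniteField

namespace TotallyIsotropic

variable {F V : Type} [Field F] [AddCommGroup V] [Module F V] {B : LinearMap.BilinForm F V}
  {U : Submodule F V}

theorem le_orthogonal (hU : TotallyIsotropic B U) : U ≤ B.orthogonal U :=
  fun x hx y hy => hU y hy x hx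

theorem bot : TotallyIsotropic B (⊥ : Submodule F V) := by
  rintro v hv w -
  rw [(Submodule.mem_bot F).1 hv, map_zero, LinearMap.zero_apply]

theorem sup_span_singleton (hB : B.IsAlt) (hU : TotallyIsotropic B U) {v : V}
    (hv : v ∈ B.orthogonal U) : TotallyIsotropic B (U ⊔ F ∙ v) := by
  intro x hx y hy
  obtain ⟨u, hu, _, hz, rfl⟩ := Submodule.mem_sup.1 hx
  obtain ⟨u', hu', _, hz', rfl⟩ := Submodule.mem_sup.1 hy
  obtain ⟨a, rfl⟩ := Submodule.mem_span_singleton.1 hz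
  obtain ⟨b, rfl⟩ := Submodule.mem_span_singleton.1 hz'
  have hvu' : B v u' = 0 := hB.isRefl _ _ (hv u' hu')
  simp only [map_add, map_smul, LinearMap.add_apply, LinearMap.smul_apply, smul_eq_mul,
    hU u hu u' hu', hv u hu, hvu', hB v]
  ring

theorem span_singleton (hB : B.IsAlt) (v : V) : TotallyIsotropic B (F ∙ v) := by
  simpa using bot.sup_span_singleton hB (v := v) (by simp)

theorem two_mul_finrank_le [FiniteDimensional F V] (hnd : B.Nondegenerate)
    (hU : TotallyIsotropic B U) : 2 * finrank F U ≤ finrank F V := by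
  have := Submodule.finrank_mono hU.le_orthogonal
  rw [LinearMap.BilinForm.finrank_orthogonal hnd] at this
  have := Submodule.finrank_le U
  omega

theorem of_le_orthogonal [FiniteDimensional F V] (hB : B.IsAlt) (hU : TotallyIsotropic B U)
    {U' : Submodule F V} (hUU' : U ≤ U') (hU'U : U' ≤ B.orthogonal U)
    (hU' : finrank F U' = finrank F U + 1) : TotallyIsotropic B U' := by
  obtain ⟨v, hv, hvU⟩ := SetLike.exists_of_lt (Submodule.lt_of_le_of_finrank_lt_finrank hUU'
    (by omega))
  rw [← Submodule.sup_span_singleton_eq_of_finrank_eq_succ hUU' hU' hv hvU]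
  exact hU.sup_span_singleton hB (hU'U hv)

theorem exists_le_finrank_eq [FiniteDimensional F V] (hB : B.IsAlt) (hnd : B.Nondegenerate)
    {k : ℕ} (hdim : finrank F V = 2 * k) (hU : TotallyIsotropic B U) (hUk : finrank F U ≤ k) :
    ∃ G, U ≤ G ∧ TotallyIsotropic B G ∧ finrank F G = k := by
  obtain ⟨d, hd⟩ := Nat.exists_eq_add_of_le hUk
  induction d generalizing U with
  | zero => exact ⟨U, le_rfl, hU, hd.symm⟩
  | succ d ih =>
    have hnle : ¬B.orthogonal U ≤ U := fun h => by
      have := Submodule.finrank_mono h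
      rw [LinearMap.BilinForm.finrank_orthogonal hnd] at this
      omega
    obtain ⟨v, hvU', hvU⟩ := SetLike.not_le_iff_exists.1 hnle
    have hrank := Submodule.finrank_sup_span_singleton hvU
    obtain ⟨G, hG, hGti, hGk⟩ :=
      ih (hU.sup_span_singleton hB hvU') (by omega) (by omega)
    exact ⟨G, le_sup_left.trans hG, hGti, hGk⟩

end TotallyIsotropic

section Generators

variable {F V : Type} [Field F] [AddCommGroup V] [Module F V] [FiniteDimensional F V]
  {B : LinearMap.BilinForm F V}

theorem isSympGenerator_iff (hB : B.IsAlt) (hnd : B.Nondegenerate) {k : ℕ}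
    (hdim : finrank F V = 2 * k) {G : Submodule F V} :
    IsSympGenerator B G ↔ TotallyIsotropic B G ∧ finrank F G = k := by
  refine ⟨fun ⟨hG, hmax⟩ => ⟨hG, le_antisymm ?_ ?_⟩, fun ⟨hG, hGk⟩ => ⟨hG, fun G' hG' => ?_⟩⟩
  · have := hG.two_mul_finrank_le hnd
    omega
  · obtain ⟨G₀, -, hG₀, hG₀k⟩ := TotallyIsotropic.bot.exists_le_finrank_eq hB hnd hdim
      (by simp)
    exact hG₀k ▸ hmax G₀ hG₀
  · have := hG'.two_mul_finrank_le hnd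
    omega

theorem TotallyIsotropic.exists_isSympGenerator_le (hB : B.IsAlt) (hnd : B.Nondegenerate)
    {k : ℕ} (hdim : finrank F V = 2 * k) {U : Submodule F V} (hU : TotallyIsotropic B U) :
    ∃ G, U ≤ G ∧ IsSympGenerator B G := by
  obtain ⟨G, hUG, hG, hGk⟩ := hU.exists_le_finrank_eq hB hnd hdim
    (by have := hU.two_mul_finrank_le hnd; omega)
  exact ⟨G, hUG, (isSympGenerator_iff hB hnd hdim).2 ⟨hG, hGk⟩⟩

theorem ncard_setOf_isSympGenerator_le [Finite F] (hB : B.IsAlt) (hnd : B.Nondegenerate)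
    {k : ℕ} (hdim : finrank F V = 2 * k) {U : Submodule F V} (hU : TotallyIsotropic B U)
    {j : ℕ} (hj : finrank F U + j = k) :
    {G | IsSympGenerator B G ∧ U ≤ G}.ncard = ∏ i ∈ Finset.range j, (Nat.card F ^ (i + 1) + 1) := by
  induction j generalizing U with
  | zero =>
    have : {G | IsSympGenerator B G ∧ U ≤ G} = {U} := by
      ext G
      simp only [isSympGenerator_iff hB hnd hdim, mem_ofPred_eq, mem_singleton_iff]
      refine ⟨fun ⟨⟨_, hGk⟩, hUG⟩ => (Submodule.eq_of_le_of_finrank_le hUG (by omega)).symm, ?_⟩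
      rintro rfl
      exact ⟨⟨hU, by omega⟩, le_rfl⟩
    simp [this]
  | succ j ih =>
    set q := Nat.card F
    have hcount := (toFinite {U' | U ≤ U' ∧ U' ≤ B.orthogonal U ∧
        finrank F U' = finrank F U + 1}).ncard_mul_eq_ncard_mul
      (toFinite {G | IsSympGenerator B G ∧ U ≤ G}) (fun U' G => U' ≤ G)
      (m := ∏ i ∈ Finset.range j, (q ^ (i + 1) + 1)) (n := ∑ i ∈ Finset.range (j + 1), q ^ i)
      ?rows ?cols
    case rows =>
      rintro U' ⟨hUU', hU'U, hU'⟩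
      rw [← ih (hU.of_le_orthogonal hB hUU' hU'U hU') (by omega)]
      congr 1
      ext G
      exact ⟨fun ⟨⟨hG, _⟩, hU'G⟩ => ⟨hG, hU'G⟩, fun ⟨hG, hU'G⟩ => ⟨⟨hG, hUU'.trans hU'G⟩, hU'G⟩⟩
    case cols =>
      rintro G ⟨hG, hUG⟩
      obtain ⟨hGti, hGk⟩ := (isSympGenerator_iff hB hnd hdim).1 hG
      have hGU : G ≤ B.orthogonal U := hGti.le_orthogonal.trans (B.orthogonal_le hUG)
      rw [← ncard_setOf_le_le_finrank_eq_succ hUG (by omega)]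
      congr 1
      ext U'
      exact ⟨fun ⟨⟨h1, _, h3⟩, h4⟩ => ⟨h1, h4, h3⟩,
        fun ⟨h1, h4, h3⟩ => ⟨⟨h1, h4.trans hGU, h3⟩, h4⟩⟩
    rw [ncard_setOf_le_le_finrank_eq_succ hU.le_orthogonal (d := 2 * (j + 1))
      (by rw [LinearMap.BilinForm.finrank_orthogonal hnd]; omega), geom_sum_range_two_mul] at hcount
    have hθ : 0 < ∑ i ∈ Finset.range (j + 1), q ^ i :=
      Finset.sum_pos (fun i _ => pow_pos Nat.card_pos i) Finset.nonempty_range_add_one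
    refine (Nat.eq_of_mul_eq_mul_right hθ ?_).symm
    rw [← hcount, Finset.prod_range_succ]
    ring

end Generators

section Orthogonal

variable {F V : Type} [Field F] [Finite F] [AddCommGroup V] [Module F V] [FiniteDimensional F V]
  {B : LinearMap.BilinForm F V}

open Classical in
theorem ncard_projPoints_inter_setOf_le_sep_le_orthogonal (hB : B.IsRefl)
    (hnd : B.Nondegenerate) {W : Submodule F V} {d : ℕ} (hWd : finrank F W = d + 1)
    {p : Submodule F V} (hp : p ∈ ProjPoints F V) :
    {P ∈ ProjPoints F V ∩ {P | P ≤ W} | p ≤ B.orthogonal P}.ncard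
      = ∑ i ∈ Finset.range d, Nat.card F ^ i
        + if p ≤ B.orthogonal W then Nat.card F ^ d else 0 := by
  have : {P ∈ ProjPoints F V ∩ {P | P ≤ W} | p ≤ B.orthogonal P}
      = ProjPoints F V ∩ {P | P ≤ W ⊓ B.orthogonal p} := by
    ext P
    simp only [mem_inter_iff, mem_ofPred_eq, le_inf_iff, hB.le_orthogonal_comm (N := p)]
    tauto
  rw [this, ncard_projPoints_inter_setOf_le]
  split_ifs with hpW
  · rw [inf_eq_left.2 (hB.le_orthogonal_comm.1 hpW), hWd, Finset.sum_range_succ]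
  · have hp1 := mem_projPoints_iff.1 hp
    have := Submodule.finrank_le p
    have := Submodule.finrank_inf_add_one_of_not_le (W := W) (H := B.orthogonal p)
      (by rw [LinearMap.BilinForm.finrank_orthogonal hnd]; omega)
      (fun h => hpW (hB.le_orthogonal_comm.1 h))
    rw [add_zero, show finrank F ↥(W ⊓ B.orthogonal p) = d by omega]

end Orthogonal

namespace IsSympMOvoid

variable {F V : Type} [Field F] [Finite F] [AddCommGroup V] [Module F V] [FiniteDimensional F V]
  {B : LinearMap.BilinForm F V} {m : ℕ} {O : Set (Submodule F V)}

theorem eq_empty (hB : B.IsAlt) (hnd : B.Nondegenerate) {k : ℕ} (hdim : finrank F V = 2 * k)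
    (hO : IsSympMOvoid B 0 O) : O = ∅ := by
  refine eq_empty_of_forall_notMem fun p hp => ?_
  obtain ⟨v, -, rfl⟩ := hO.1 hp
  obtain ⟨G, hpG, hG⟩ :=
    (TotallyIsotropic.span_singleton hB v).exists_isSympGenerator_le hB hnd hdim
  have := hO.2 G hG
  rw [ncard_eq_zero] at this
  exact this.subset ⟨hp, hpG⟩

theorem projPoints_diff (hB : B.IsAlt) (hnd : B.Nondegenerate) {n : ℕ}
    (hdim : finrank F V = 2 * (n + 1)) (hO : IsSympMOvoid B m O) :
    IsSympMOvoid B ((∑ i ∈ Finset.range (n + 1), Nat.card F ^ i) - m) (ProjPoints F V \ O) := by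
  refine ⟨sdiff_subset, fun G hG => ?_⟩
  have : (ProjPoints F V \ O) ∩ {p | p ≤ G}
      = (ProjPoints F V ∩ {p | p ≤ G}) \ (O ∩ {p | p ≤ G}) := by
    ext p
    simp only [mem_inter_iff, mem_sdiff]
    tauto
  rw [this, ncard_sdiff (inter_subset_inter_left _ hO.1), hO.2 G hG,
    ncard_projPoints_inter_setOf_le, ((isSympGenerator_iff hB hnd hdim).1 hG).2]

theorem ncard_eq (hB : B.IsAlt) (hnd : B.Nondegenerate) {n : ℕ}
    (hdim : finrank F V = 2 * (n + 1)) (hO : IsSympMOvoid B m O) :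
    O.ncard = (Nat.card F ^ (n + 1) + 1) * m := by
  have hcount := (toFinite O).ncard_mul_eq_ncard_mul (toFinite {G | IsSympGenerator B G ∧ ⊥ ≤ G})
    (fun p G => p ≤ G) (m := ∏ i ∈ Finset.range n, (Nat.card F ^ (i + 1) + 1)) (n := m) ?rows ?cols
  case rows =>
    intro p hp
    obtain ⟨v, hv, rfl⟩ := hO.1 hp
    rw [← ncard_setOf_isSympGenerator_le hB hnd hdim (TotallyIsotropic.span_singleton hB v)
      (by rw [finrank_span_singleton hv]; omega)]
    simp only [bot_le, and_true, sep_ofPred]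
  case cols => exact fun G hG => hO.2 G hG.1
  rw [ncard_setOf_isSympGenerator_le hB hnd hdim TotallyIsotropic.bot (j := n + 1) (by simp),
    Finset.prod_range_succ] at hcount
  have hpos : 0 < ∏ i ∈ Finset.range n, (Nat.card F ^ (i + 1) + 1) :=
    Finset.prod_pos fun i _ => Nat.succ_pos _
  refine Nat.eq_of_mul_eq_mul_right hpos ?_
  rw [hcount]
  ring

theorem ncard_sep_le_orthogonal (hB : B.IsAlt) (hnd : B.Nondegenerate) {n : ℕ}
    (hdim : finrank F V = 2 * (n + 1)) (hn : 1 ≤ n) (hO : IsSympMOvoid B m O)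
    {P : Submodule F V} (hP : P ∈ ProjPoints F V) (hPO : P ∉ O) :
    {p ∈ O | p ≤ B.orthogonal P}.ncard = (Nat.card F ^ n + 1) * m := by
  obtain ⟨n, rfl⟩ : ∃ n', n = n' + 1 := ⟨n - 1, by omega⟩
  obtain ⟨u, hu, rfl⟩ := hP
  have hcount := (toFinite {p ∈ O | p ≤ B.orthogonal (F ∙ u)}).ncard_mul_eq_ncard_mul
    (toFinite {G | IsSympGenerator B G ∧ F ∙ u ≤ G}) (fun p G => p ≤ G)
    (m := ∏ i ∈ Finset.range n, (Nat.card F ^ (i + 1) + 1)) (n := m) ?rows ?cols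
  case rows =>
    rintro p ⟨hpO, hpP⟩
    obtain ⟨v, hv, rfl⟩ := hO.1 hpO
    have hvu : v ∉ F ∙ u := fun h => hPO <| by
      rwa [Submodule.eq_of_le_of_finrank_le ((Submodule.span_singleton_le_iff_mem _ _).2 h)
        (by rw [finrank_span_singleton hu, finrank_span_singleton hv])] at hpO
    rw [← ncard_setOf_isSympGenerator_le hB hnd hdim
      ((TotallyIsotropic.span_singleton hB u).sup_span_singleton hB
        (hpP (Submodule.mem_span_singleton_self v)))
      (by rw [Submodule.finrank_sup_span_singleton hvu, finrank_span_singleton hu]; omega)]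
    simp only [sep_ofPred, sup_le_iff, and_assoc]
  case cols =>
    rintro G ⟨hG, hPG⟩
    have hGP : G ≤ B.orthogonal (F ∙ u) := hG.1.le_orthogonal.trans (B.orthogonal_le hPG)
    rw [← hO.2 G hG]
    congr 1
    ext p
    exact ⟨fun ⟨⟨h1, _⟩, h2⟩ => ⟨h1, h2⟩, fun ⟨h1, h2⟩ => ⟨⟨h1, h2.trans hGP⟩, h2⟩⟩
  rw [ncard_setOf_isSympGenerator_le hB hnd hdim (TotallyIsotropic.span_singleton hB u)
    (j := n + 1) (by rw [finrank_span_singleton hu]; omega), Finset.prod_range_succ] at hcount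
  have hpos : 0 < ∏ i ∈ Finset.range n, (Nat.card F ^ (i + 1) + 1) :=
    Finset.prod_pos fun i _ => Nat.succ_pos _
  refine Nat.eq_of_mul_eq_mul_right hpos ?_
  rw [hcount]
  ring

theorem ncard_sep_le_orthogonal_mul_pow (hB : B.IsAlt) (hnd : B.Nondegenerate) {n : ℕ}
    (hdim : finrank F V = 2 * (n + 1)) (hn : 1 ≤ n) (hO : IsSympMOvoid B m O)
    {W : Submodule F V} {d : ℕ} (hWd : finrank F W = d + 1)
    (hW : ∀ P ∈ ProjPoints F V, P ≤ W → P ∉ O) :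
    {p ∈ O | p ≤ B.orthogonal W}.ncard * Nat.card F ^ d
      = m * (Nat.card F ^ d + Nat.card F ^ n) := by
  set q := Nat.card F
  classical
  have hrow : ∀ P ∈ (toFinite (ProjPoints F V ∩ {P | P ≤ W})).toFinset,
      {p ∈ O | p ≤ B.orthogonal P}.ncard = (q ^ n + 1) * m := fun P hP =>
    have hP := (toFinite _).mem_toFinset.1 hP
    hO.ncard_sep_le_orthogonal hB hnd hdim hn hP.1 (hW P hP.1 hP.2)
  have hcol : ∀ p ∈ (toFinite O).toFinset,
      {P ∈ ProjPoints F V ∩ {P | P ≤ W} | p ≤ B.orthogonal P}.ncard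
        = ∑ i ∈ Finset.range d, q ^ i + if p ≤ B.orthogonal W then q ^ d else 0 := fun p hp =>
    ncard_projPoints_inter_setOf_le_sep_le_orthogonal hB.isRefl hnd hWd
      (hO.1 ((toFinite O).mem_toFinset.1 hp))
  have hdc := (toFinite (ProjPoints F V ∩ {P | P ≤ W})).sum_ncard_sep_eq_sum_ncard_sep
    (toFinite O) (fun P p => p ≤ B.orthogonal P)
  rw [Finset.sum_const_nat hrow, Finset.sum_congr rfl hcol, Finset.sum_add_distrib,
    Finset.sum_const, Finset.sum_ite, Finset.sum_const_zero, add_zero, Finset.sum_const,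
    smul_eq_mul, smul_eq_mul, ← ncard_eq_toFinset_card _ (toFinite _),
    ← ncard_eq_toFinset_card _ (toFinite _), ← Set.ncard_coe_finset, Finset.coe_filter,
    ncard_projPoints_inter_setOf_le, hWd, Finset.sum_range_succ,
    hO.ncard_eq hB hnd hdim] at hdc
  simp only [Set.Finite.mem_toFinset] at hdc
  have hgeom : (∑ i ∈ Finset.range d, (q : ℤ) ^ i) * (q - 1) = q ^ d - 1 := geom_sum_mul _ _
  zify at hdc ⊢
  linear_combination -hdc - (m : ℤ) * q ^ n * hgeom

end IsSympMOvoid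

theorem eq_zero_or_of_mul_pow_eq {q e n s m : ℕ} (hq : 2 ≤ q) (he : 1 ≤ e)
    (h : s * q ^ (e + n) = m * (q ^ (e + n) + q ^ n)) (hs : s ≤ q + 1) :
    m = 0 ∨ e = 1 ∧ m = q := by
  have h' : s * q ^ e = m * (q ^ e + 1) := by
    refine Nat.eq_of_mul_eq_mul_right (pow_pos (by omega : 0 < q) n) ?_
    calc s * q ^ e * q ^ n = m * (q ^ (e + n) + q ^ n) := by rw [← h, pow_add, mul_assoc]
      _ = m * (q ^ e + 1) * q ^ n := by ring
  have hqe : 0 < q ^ e := pow_pos (by omega) e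
  obtain ⟨t, rfl⟩ : q ^ e ∣ m :=
    (Nat.coprime_self_add_right.2 (Nat.coprime_one_right _)).dvd_of_dvd_mul_right ⟨s, by
      rw [← h', mul_comm]⟩
  rcases Nat.eq_zero_or_pos t with rfl | ht
  · exact Or.inl (mul_zero _)
  have hst : s = t * (q ^ e + 1) :=
    Nat.eq_of_mul_eq_mul_right hqe (by rw [h']; ring)
  have hle : q ^ e ≤ q ^ 1 := by
    rw [pow_one]
    nlinarith
  obtain rfl : e = 1 := le_antisymm ((Nat.pow_le_pow_iff_right hq).1 hle) he
  obtain rfl : t = 1 := by nlinarith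
  exact Or.inr ⟨rfl, by ring⟩

theorem mOvoid_symplectic_containing_section_general
    {q n m : ℕ} (hn : 2 ≤ n)
    {F : Type} [Field F] [Fintype F] (hcard : Fintype.card F = q)
    (B : LinearMap.BilinForm F (Fin (2 * n + 2) → F))
    (halt : ∀ v : Fin (2 * n + 2) → F, B v v = 0)
    (hnd : ∀ v : Fin (2 * n + 2) → F, (∀ w, B v w = 0) → v = 0)
    (O : Set (Submodule F (Fin (2 * n + 2) → F)))
    (hnm : ¬(n = 2 ∧ m = q ^ 2 + 1))
    (hO : IsSympMOvoid B m O)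
    (W : Submodule F (Fin (2 * n + 2) → F))
    (hWdim : Module.finrank F W = 2 * n)
    (hcont : ProjPoints F (Fin (2 * n + 2) → F) ∩ {p | p ≤ W} ⊆ O) :
    O = ProjPoints F (Fin (2 * n + 2) → F) := by
  rw [Fintype.card_eq_nat_card] at hcard
  subst hcard
  have hq : 2 ≤ Nat.card F := Finite.one_lt_card
  have hB : B.IsAlt := halt
  have hB' : B.Nondegenerate :=
    (LinearMap.IsRefl.nondegenerate_iff_separatingLeft hB.isRefl).2 hnd
  have hdim : finrank F (Fin (2 * n + 2) → F) = 2 * (n + 1) := by rw [finrank_fin_fun]; ring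
  have hO' := hO.projPoints_diff hB hB' hdim
  -- `finrank W = 2n` is written as `((n - 1) + n) + 1` to match `eq_zero_or_of_mul_pow_eq`
  have key := hO'.ncard_sep_le_orthogonal_mul_pow hB hB' hdim (by omega) (d := n - 1 + n)
    (by omega) fun P hP hPW hPO' => hPO'.2 (hcont ⟨hP, hPW⟩)
  have hs : {p ∈ ProjPoints F _ \ O | p ≤ B.orthogonal W}.ncard ≤ Nat.card F + 1 :=
    calc _ ≤ (ProjPoints F _ ∩ {p | p ≤ B.orthogonal W}).ncard :=
          ncard_le_ncard fun p hp => ⟨hp.1.1, hp.2⟩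
      _ = Nat.card F + 1 := by
          rw [ncard_projPoints_inter_setOf_le, LinearMap.BilinForm.finrank_orthogonal hB', hdim,
            hWdim, show 2 * (n + 1) - 2 * n = 2 by omega]
          simp [Finset.sum_range_succ, add_comm]
  rcases eq_zero_or_of_mul_pow_eq hq (by omega) key hs with h0 | ⟨h1, hm⟩
  · rw [h0] at hO'
    exact hO.1.antisymm (sdiff_eq_empty.1 (hO'.eq_empty hB hB' hdim))
  · obtain rfl : n = 2 := by omega
    simp only [Finset.sum_range_succ, Finset.sum_range_zero, pow_zero, pow_one] at hm
    exact absurd ⟨rfl, by omega⟩ hnm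

/-- If an `m`-ovoid (`m ≥ 1`, `(n,m) ≠ (2,q²+1)`) of `W(2n+1,q)` contains all the
projective points of an embedded `W(2n-1,q)`, then it consists of all the projective
points of `PG(2n+1,q)`. -/
theorem mOvoid_symplectic_containing_section
    {q n m : ℕ} (hqpp : IsPrimePow q) (hn : 2 ≤ n)
    {F : Type} [Field F] [Fintype F] (hcard : Fintype.card F = q)
    (B : LinearMap.BilinForm F (Fin (2 * n + 2) → F))
    (halt : ∀ v : Fin (2 * n + 2) → F, B v v = 0)
    (hnd : ∀ v : Fin (2 * n + 2) → F, (∀ w, B v w = 0) → v = 0)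
    (O : Set (Submodule F (Fin (2 * n + 2) → F)))
    (hm : 1 ≤ m)
    (hnm : ¬(n = 2 ∧ m = q ^ 2 + 1))
    (hO : IsSympMOvoid B m O)
    (W : Submodule F (Fin (2 * n + 2) → F))
    (hWdim : Module.finrank F W = 2 * n)
    (hWnd : ∀ v ∈ W, (∀ w ∈ W, B v w = 0) → v = 0)
    (hcont : ProjPoints F (Fin (2 * n + 2) → F) ∩ {p | p ≤ W} ⊆ O) :
    O = ProjPoints F (Fin (2 * n + 2) → F) :=
  mOvoid_symplectic_containing_section_general hn hcard B halt hnd O hnm hO W hWdim hcont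
end

section
/- Let q be a prime power and let Q be a nondegenerate quadratic form of Witt index 4 on 𝔽_q^8 (hyperbolic quadric Q⁺(7,q)). Let π be a 6-dimensional vector subspace of 𝔽_q^8 on which Q restricts to a nondegenerate form of Witt index 2 (an elliptic quadric Q⁻(5,q) section). Then (a) every generator G of the quadric of Q (i.e. every 4-dimensional totally singular subspace) satisfies dim(G ∩ π) = 2, and G ∩ π is a maximal totally singular subspace of (π, Q|_π); and consequently (b) every set 𝒪 of points of the quadric lying in π that is an m-ovoid of the quadric of Q|_π is also an m-ovoid of the quadric of Q. -/
open Module Set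

/-- A subspace `W` is totally singular for `Q` if `Q` vanishes identically on `W`. -/
def TotallySingular {F V : Type} [Field F] [AddCommGroup V] [Module F V]
    (Q : V → F) (W : Submodule F V) : Prop :=
  ∀ v ∈ W, Q v = 0

/-- The points of the quadric of `Q`: projective points spanned by singular vectors. -/
def QuadricPoints {F V : Type} [Field F] [AddCommGroup V] [Module F V]
    (Q : V → F) : Set (Submodule F V) :=
  {p | ∃ v : V, v ≠ 0 ∧ Q v = 0 ∧ p = Submodule.span F {v}}

/-- A generator of the quadric cut out by `Q` on the subspace `W`: a totally singular
subspace of `W` of maximal vector dimension. -/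
def IsGeneratorIn {F V : Type} [Field F] [AddCommGroup V] [Module F V]
    (Q : V → F) (W G : Submodule F V) : Prop :=
  G ≤ W ∧ TotallySingular Q G ∧
    ∀ G' : Submodule F V, G' ≤ W → TotallySingular Q G' →
      Module.finrank F G' ≤ Module.finrank F G

/-- A generator of the quadric of `Q`: a totally singular subspace of maximal
vector dimension. -/
def IsGenerator {F V : Type} [Field F] [AddCommGroup V] [Module F V]
    (Q : V → F) (G : Submodule F V) : Prop :=
  IsGeneratorIn Q ⊤ G

/-- An `m`-ovoid of the quadric of `Q`: a set of points of the quadric such that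
every generator contains exactly `m` of its points. -/
def IsMOvoid {F V : Type} [Field F] [AddCommGroup V] [Module F V]
    (Q : V → F) (m : ℕ) (O : Set (Submodule F V)) : Prop :=
  O ⊆ QuadricPoints Q ∧
    ∀ G : Submodule F V, IsGenerator Q G → (O ∩ {p | p ≤ G}).ncard = m

/-- An `m`-ovoid of the quadric cut out by `Q` on the subspace `W`. -/
def IsMOvoidIn {F V : Type} [Field F] [AddCommGroup V] [Module F V]
    (Q : V → F) (W : Submodule F V) (m : ℕ) (O : Set (Submodule F V)) : Prop :=
  O ⊆ QuadricPoints Q ∧ (∀ p ∈ O, p ≤ W) ∧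
    ∀ G : Submodule F V, IsGeneratorIn Q W G → (O ∩ {p | p ≤ G}).ncard = m

/-- The polar form of `Q`. -/
def polarForm {F V : Type} [Field F] [AddCommGroup V] [Module F V]
    (Q : V → F) (x y : V) : F :=
  Q (x + y) - Q x - Q y

/-- `Q` restricts to a nondegenerate form on the subspace `W`. -/
def NondegenerateOn {F V : Type} [Field F] [AddCommGroup V] [Module F V]
    (Q : V → F) (W : Submodule F V) : Prop :=
  ∀ v ∈ W, (∀ w ∈ W, polarForm Q v w = 0) → v = 0

/-- `Q` restricted to the subspace `W` has Witt index `n`. -/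
def HasWittIndexOn {F V : Type} [Field F] [AddCommGroup V] [Module F V]
    (Q : V → F) (W : Submodule F V) (n : ℕ) : Prop :=
  (∃ G : Submodule F V, G ≤ W ∧ TotallySingular Q G ∧ Module.finrank F G = n) ∧
    ∀ G : Submodule F V, G ≤ W → TotallySingular Q G → Module.finrank F G ≤ n

/-- Every generator of `Q⁺(7,q)` meets an elliptic `Q⁻(5,q)` section `π` in a generator
of the section; consequently, any `m`-ovoid of the `Q⁻(5,q)` section is an `m`-ovoid of
`Q⁺(7,q)`. -/
theorem mOvoid_of_elliptic_section_is_mOvoid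
    {q : ℕ} (hqpp : IsPrimePow q)
    {F : Type} [Field F] [Fintype F] (hcard : Fintype.card F = q)
    (Q : QuadraticForm F (Fin 8 → F))
    (hQnd : NondegenerateOn (⇑Q) ⊤)
    (hQw : HasWittIndexOn (⇑Q) ⊤ 4)
    (π : Submodule F (Fin 8 → F))
    (hdim : Module.finrank F π = 6)
    (hπnd : NondegenerateOn (⇑Q) π)
    (hπw : HasWittIndexOn (⇑Q) π 2) :
    (∀ G : Submodule F (Fin 8 → F), TotallySingular (⇑Q) G → Module.finrank F G = 4 →
        Module.finrank F ↥(G ⊓ π) = 2 ∧ IsGeneratorIn (⇑Q) π (G ⊓ π)) ∧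
    (∀ (m : ℕ) (O : Set (Submodule F (Fin 8 → F))),
        IsMOvoidIn (⇑Q) π m O → IsMOvoid (⇑Q) m O) := by
  have hfin : Module.finrank F (Fin 8 → F) = 8 := by simp
  have key : ∀ G : Submodule F (Fin 8 → F), TotallySingular (⇑Q) G →
      Module.finrank F G = 4 →
      Module.finrank F ↥(G ⊓ π) = 2 ∧ IsGeneratorIn (⇑Q) π (G ⊓ π) := by
    intro G hGs hG4
    have hts : TotallySingular (⇑Q) (G ⊓ π) := fun v hv => hGs v hv.1
    have hle : Module.finrank F ↥(G ⊓ π) ≤ 2 := hπw.2 _ inf_le_right hts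
    have hsum : Module.finrank F ↥(G ⊔ π) + Module.finrank F ↥(G ⊓ π)
        = Module.finrank F G + Module.finrank F π :=
      Submodule.finrank_sup_add_finrank_inf_eq G π
    have hsup : Module.finrank F ↥(G ⊔ π) ≤ 8 := le_trans (Submodule.finrank_le _) (le_of_eq hfin)
    have h2 : Module.finrank F ↥(G ⊓ π) = 2 := by omega
    exact ⟨h2, inf_le_right, hts, fun G' hG' hG's => h2 ▸ hπw.2 G' hG' hG's⟩
  refine ⟨key, ?_⟩
  intro m O hO
  obtain ⟨hOsub, hOπ, hOgen⟩ := hO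
  refine ⟨hOsub, ?_⟩
  intro G hG
  obtain ⟨-, hGs, hGmax⟩ := hG
  obtain ⟨⟨G₀, -, hG₀s, hG₀4⟩, hbound⟩ := hQw
  have hG4 : Module.finrank F G = 4 :=
    le_antisymm (hbound G le_top hGs) (hG₀4 ▸ hGmax G₀ le_top hG₀s)
  obtain ⟨h2, hgen⟩ := key G hGs hG4
  have heq : O ∩ {p | p ≤ G} = O ∩ {p | p ≤ G ⊓ π} := by
    ext p
    simp only [Set.mem_inter_iff, Set.mem_setOf_eq, le_inf_iff]
    exact and_congr_right fun hp => ⟨fun h => ⟨h, hOπ p hp⟩, fun h => h.1⟩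
  rw [heq]
  exact hOgen _ hgen
end

section
/- Let q be an odd prime power and let Q be a nondegenerate quadratic form of Witt index 4 on 𝔽_q^8 (hyperbolic quadric Q⁺(7,q)). Let π₁ be a 6-dimensional vector subspace of 𝔽_q^8 on which Q restricts to a nondegenerate form of Witt index 2 (an elliptic quadric Q⁻(5,q) section), and suppose 𝒪₁ is a (q+1)/2-ovoid of the quadric of Q|_{π₁}. Then there exist a 6-dimensional subspace π₂ ≠ π₁ on which Q restricts to a nondegenerate form of Witt index 2, and a (q+1)/2-ovoid 𝒪₂ of the quadric of Q|_{π₂}, such that 𝒪₁ and 𝒪₂ are disjoint and 𝒪₁ ∪ 𝒪₂ is a (q+1)-ovoid of the quadric of Q. -/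
open Module Set

set_option linter.unusedSectionVars false
set_option maxHeartbeats 1000000

section AuxLemmas

variable {F V : Type} [Field F] [AddCommGroup V] [Module F V]

private instance finiteSubmodule [Finite V] : Finite (Submodule F V) :=
  Finite.of_injective (fun W => (W : Set V)) SetLike.coe_injective

private lemma polarForm_eq_polar (Q : QuadraticForm F V) (x y : V) :
    polarForm ⇑Q x y = QuadraticMap.polar ⇑Q x y := rfl

private lemma polarForm_comm (Q : V → F) (x y : V) :
    polarForm Q x y = polarForm Q y x := by
  unfold polarForm
  rw [add_comm]
  ring

private lemma Q_add_expand (Q : QuadraticForm F V) (x y : V) :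
    Q (x + y) = Q x + Q y + polarForm ⇑Q x y := by
  unfold polarForm
  ring

/-- The number of projective points in a 2-dimensional subspace is `q + 1`. -/
private lemma ncard_points_of_rank_two [Fintype F] [Finite V]
    (W : Submodule F V) (hW : Module.finrank F W = 2) :
    {p : Submodule F V | ∃ w, w ∈ W ∧ w ≠ 0 ∧ p = Submodule.span F {w}}.ncard
      = Fintype.card F + 1 := by
  classical
  set S : Set (Submodule F V) := {p | ∃ w, w ∈ W ∧ w ≠ 0 ∧ p = Submodule.span F {w}}
    with hS
  have hrep : ∀ p : S, ∃ w, w ∈ W ∧ w ≠ 0 ∧ (p : Submodule F V) = Submodule.span F {w} :=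
    fun p => p.2
  choose rep hrepW hrep0 hrepspan using hrep
  set X : Set V := (W : Set V) \ {0} with hX
  have hgmem : ∀ (p : S) (c : {c : F // c ≠ 0}), (c : F) • rep p ∈ X := by
    intro p c
    refine ⟨W.smul_mem _ (hrepW p), ?_⟩
    simp only [Set.mem_singleton_iff]
    exact smul_ne_zero c.2 (hrep0 p)
  let g : S × {c : F // c ≠ 0} → X := fun pc => ⟨(pc.2 : F) • rep pc.1, hgmem pc.1 pc.2⟩
  have hginj : Function.Injective g := by
    rintro ⟨p, c⟩ ⟨p', c'⟩ h
    have h' : (c : F) • rep p = (c' : F) • rep p' := congrArg Subtype.val h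
    have hpp' : p = p' := by
      apply Subtype.ext
      rw [hrepspan p, hrepspan p',
        ← Submodule.span_singleton_smul_eq (IsUnit.mk0 (c : F) c.2) (rep p),
        ← Submodule.span_singleton_smul_eq (IsUnit.mk0 (c' : F) c'.2) (rep p'), h']
    subst hpp'
    have hcc : (c : F) = (c' : F) := smul_left_injective F (hrep0 p) h'
    exact Prod.ext rfl (Subtype.ext hcc)
  have hgsurj : Function.Surjective g := by
    rintro ⟨w, hw⟩
    have hwW : w ∈ W := hw.1
    have hw0 : w ≠ 0 := by simpa using hw.2
    have hpS : Submodule.span F {w} ∈ S := ⟨w, hwW, hw0, rfl⟩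
    set p : S := ⟨Submodule.span F {w}, hpS⟩ with hp
    have hrp : rep p ∈ Submodule.span F {w} := by
      have h1 : rep p ∈ (p : Submodule F V) := by
        rw [hrepspan p]
        exact Submodule.mem_span_singleton_self _
      exact h1
    obtain ⟨d, hd⟩ := Submodule.mem_span_singleton.mp hrp
    have hd0 : d ≠ 0 := by
      intro h0
      apply hrep0 p
      rw [← hd, h0, zero_smul]
    refine ⟨⟨p, ⟨d⁻¹, inv_ne_zero hd0⟩⟩, ?_⟩
    apply Subtype.ext
    show d⁻¹ • rep p = w
    rw [← hd, smul_smul, inv_mul_cancel₀ hd0, one_smul]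
  have hcard : Nat.card (S × {c : F // c ≠ 0}) = Nat.card X :=
    Nat.card_eq_of_bijective g ⟨hginj, hgsurj⟩
  haveI : Fintype V := Fintype.ofFinite V
  set q : ℕ := Fintype.card F with hq
  have hq2 : 2 ≤ q := Fintype.one_lt_card
  have hcardW : (W : Set V).ncard = q ^ 2 := by
    rw [← Nat.card_coe_set_eq]
    have e : ↥(W : Set V) ≃ ↥W := Equiv.setCongr rfl
    rw [Nat.card_congr e, Nat.card_eq_fintype_card]
    rw [card_eq_pow_finrank (K := F) (V := ↥W), hW]
  have hcardX : Nat.card X = q ^ 2 - 1 := by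
    rw [Nat.card_coe_set_eq, hX, Set.ncard_diff (by simpa using W.zero_mem),
      Set.ncard_singleton, hcardW]
  have hcardc : Nat.card {c : F // c ≠ 0} = q - 1 := by
    rw [Nat.card_congr unitsEquivNeZero.symm, Nat.card_eq_fintype_card, Fintype.card_units]
  rw [Nat.card_prod, Nat.card_coe_set_eq, hcardc, hcardX] at hcard
  have hfact : (q + 1) * (q - 1) = q ^ 2 - 1 := by
    have h1 : 1 ≤ q := by omega
    have h2 : 1 ≤ q ^ 2 := Nat.one_le_pow _ _ (by omega)
    zify [h1, h2]
    ring
  have := hcard.trans hfact.symm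
  exact Nat.eq_of_mul_eq_mul_right (by omega) this

/-- Points of the quadric inside a totally singular 2-dim subspace number `q+1`. -/
private lemma ncard_quadric_points_in_ts [Fintype F] [Finite V]
    (Q : QuadraticForm F V) (W : Submodule F V) (hTS : TotallySingular ⇑Q W)
    (hW : Module.finrank F W = 2) :
    (QuadricPoints ⇑Q ∩ {p | p ≤ W}).ncard = Fintype.card F + 1 := by
  have hset : QuadricPoints ⇑Q ∩ {p | p ≤ W}
      = {p : Submodule F V | ∃ w, w ∈ W ∧ w ≠ 0 ∧ p = Submodule.span F {w}} := by
    ext p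
    constructor
    · rintro ⟨⟨v, hv0, hvQ, rfl⟩, hle⟩
      exact ⟨v, (Submodule.span_singleton_le_iff_mem _ _).mp hle, hv0, rfl⟩
    · rintro ⟨w, hwW, hw0, rfl⟩
      exact ⟨⟨w, hw0, hTS w hwW, rfl⟩, (Submodule.span_singleton_le_iff_mem _ _).mpr hwW⟩
  rw [hset]
  exact ncard_points_of_rank_two W hW

section Transport

variable (Q : QuadraticForm F V) (e : V ≃ₗ[F] V)

private lemma map_map_self (he : ∀ x, e (e x) = x) (P : Submodule F V) :
    (P.map (e : V →ₗ[F] V)).map (e : V →ₗ[F] V) = P := by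
  rw [← Submodule.map_comp]
  have hcomp : (e : V →ₗ[F] V) ∘ₗ (e : V →ₗ[F] V) = LinearMap.id := by
    ext x
    exact he x
  rw [hcomp, Submodule.map_id]

private lemma polar_map (hQe : ∀ x, Q (e x) = Q x) (x y : V) :
    polarForm ⇑Q (e x) (e y) = polarForm ⇑Q x y := by
  unfold polarForm
  rw [← map_add, hQe, hQe, hQe]

private lemma totallySingular_map (hQe : ∀ x, Q (e x) = Q x) {G : Submodule F V}
    (h : TotallySingular ⇑Q G) :
    TotallySingular ⇑Q (G.map (e : V →ₗ[F] V)) := by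
  rintro x hx
  rcases Submodule.mem_map.mp hx with ⟨y, hy, rfl⟩
  simpa [hQe] using h y hy

private lemma isGeneratorIn_map (hQe : ∀ x, Q (e x) = Q x) (he : ∀ x, e (e x) = x)
    {W G : Submodule F V} (h : IsGeneratorIn ⇑Q W G) :
    IsGeneratorIn ⇑Q (W.map (e : V →ₗ[F] V)) (G.map (e : V →ₗ[F] V)) := by
  obtain ⟨hle, hTS, hmax⟩ := h
  refine ⟨Submodule.map_mono hle, totallySingular_map Q e hQe hTS, ?_⟩
  intro G' hG'le hG'TS
  have h1 : G'.map (e : V →ₗ[F] V) ≤ W := by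
    have := Submodule.map_mono (f := (e : V →ₗ[F] V)) hG'le
    rwa [map_map_self e he] at this
  calc Module.finrank F G' = Module.finrank F (G'.map (e : V →ₗ[F] V)) :=
        (LinearEquiv.finrank_map_eq e G').symm
    _ ≤ Module.finrank F G := hmax _ h1 (totallySingular_map Q e hQe hG'TS)
    _ = Module.finrank F (G.map (e : V →ₗ[F] V)) := (LinearEquiv.finrank_map_eq e G).symm

private lemma nondegenerateOn_map (hQe : ∀ x, Q (e x) = Q x) (he : ∀ x, e (e x) = x)
    {W : Submodule F V} (h : NondegenerateOn ⇑Q W) :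
    NondegenerateOn ⇑Q (W.map (e : V →ₗ[F] V)) := by
  intro x hx hperp
  rcases Submodule.mem_map.mp hx with ⟨y, hy, rfl⟩
  have hy0 : y = 0 := by
    apply h y hy
    intro w hw
    have h0 := hperp (e w) (Submodule.mem_map_of_mem hw)
    simp only [LinearEquiv.coe_coe] at h0
    rwa [polar_map Q e hQe] at h0
  rw [hy0, map_zero]

private lemma hasWittIndexOn_map (hQe : ∀ x, Q (e x) = Q x) (he : ∀ x, e (e x) = x)
    {W : Submodule F V} {n : ℕ} (h : HasWittIndexOn ⇑Q W n) :
    HasWittIndexOn ⇑Q (W.map (e : V →ₗ[F] V)) n := by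
  obtain ⟨⟨G₀, hle, hTS, hrk⟩, hmax⟩ := h
  constructor
  · exact ⟨G₀.map (e : V →ₗ[F] V), Submodule.map_mono hle,
      totallySingular_map Q e hQe hTS, by rw [LinearEquiv.finrank_map_eq, hrk]⟩
  · intro G hGle hGTS
    have h1 : G.map (e : V →ₗ[F] V) ≤ W := by
      have := Submodule.map_mono (f := (e : V →ₗ[F] V)) hGle
      rwa [map_map_self e he] at this
    have := hmax _ h1 (totallySingular_map Q e hQe hGTS)
    rwa [LinearEquiv.finrank_map_eq] at this

end Transport

section Sections

variable [FiniteDimensional F V]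

/-- A generator of the big quadric meets a 6-dim Witt-index-2 section in a generator
of the section. -/
private lemma generator_inf (hV : Module.finrank F V = 8)
    (Q : QuadraticForm F V) (hQw : HasWittIndexOn ⇑Q ⊤ 4)
    (π : Submodule F V) (hdim : Module.finrank F π = 6)
    (hπw : HasWittIndexOn ⇑Q π 2)
    {G : Submodule F V} (hG : IsGenerator ⇑Q G) :
    IsGeneratorIn ⇑Q π (G ⊓ π) := by
  obtain ⟨hGle, hGTS, hGmax⟩ := hG
  obtain ⟨⟨G₀, hG₀le, hG₀TS, hG₀rk⟩, hWmax⟩ := hQw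
  have h4a := hGmax G₀ le_top hG₀TS
  have h4b := hWmax G le_top hGTS
  have hG4 : Module.finrank F G = 4 := by omega
  have hsup : Module.finrank F ↥(G ⊔ π) ≤ 8 := hV ▸ Submodule.finrank_le _
  have heq := Submodule.finrank_sup_add_finrank_inf_eq G π
  obtain ⟨⟨G₁, hG₁le, hG₁TS, hG₁rk⟩, hπmax⟩ := hπw
  have hinfTS : TotallySingular ⇑Q (G ⊓ π) := fun v hv =>
    hGTS v (Submodule.mem_inf.mp hv).1
  have hinfle := hπmax _ inf_le_right hinfTS
  exact ⟨inf_le_right, hinfTS, fun G' hle hTS => by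
    have := hπmax G' hle hTS
    omega⟩

private lemma ovoid_count {Q : QuadraticForm F V} {π : Submodule F V} {m : ℕ}
    {O : Set (Submodule F V)} (hO : IsMOvoidIn ⇑Q π m O)
    {G : Submodule F V} (hGin : IsGeneratorIn ⇑Q π (G ⊓ π)) :
    (O ∩ {p | p ≤ G}).ncard = m := by
  have heq : O ∩ {p | p ≤ G} = O ∩ {p | p ≤ G ⊓ π} := by
    ext p
    simp only [Set.mem_inter_iff, Set.mem_setOf_eq, le_inf_iff, and_congr_right_iff]
    exact fun hp => ⟨fun h => ⟨h, hO.2.1 p hp⟩, fun h => h.1⟩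
  rw [heq, hO.2.2 (G ⊓ π) hGin]

end Sections

end AuxLemmas
/-- Any `(q+1)/2`-ovoid of an elliptic `Q⁻(5,q)` section of `Q⁺(7,q)` can be completed,
by a disjoint `(q+1)/2`-ovoid of another elliptic `Q⁻(5,q)` section, to a `(q+1)`-ovoid
of `Q⁺(7,q)`. -/
theorem glueing_hemisystems_gives_qPlusOne_ovoid
    {q : ℕ} (hqodd : Odd q) (hqpp : IsPrimePow q)
    {F : Type} [Field F] [Fintype F] (hcard : Fintype.card F = q)
    (Q : QuadraticForm F (Fin 8 → F))
    (hQnd : NondegenerateOn (⇑Q) ⊤)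
    (hQw : HasWittIndexOn (⇑Q) ⊤ 4)
    (π₁ : Submodule F (Fin 8 → F))
    (hdim1 : Module.finrank F π₁ = 6)
    (h1nd : NondegenerateOn (⇑Q) π₁)
    (h1w : HasWittIndexOn (⇑Q) π₁ 2)
    (O₁ : Set (Submodule F (Fin 8 → F)))
    (hO₁ : IsMOvoidIn (⇑Q) π₁ ((q + 1) / 2) O₁) :
    ∃ (π₂ : Submodule F (Fin 8 → F)) (O₂ : Set (Submodule F (Fin 8 → F))),
      π₂ ≠ π₁ ∧
      Module.finrank F π₂ = 6 ∧
      NondegenerateOn (⇑Q) π₂ ∧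
      HasWittIndexOn (⇑Q) π₂ 2 ∧
      IsMOvoidIn (⇑Q) π₂ ((q + 1) / 2) O₂ ∧
      Disjoint O₁ O₂ ∧
      IsMOvoid (⇑Q) (q + 1) (O₁ ∪ O₂) := by
  classical
  obtain ⟨k, hk⟩ := hqodd
  have hq2 : 2 ≤ q := hqpp.two_le
  have h2F : (2 : F) ≠ 0 := by
    apply Ring.two_ne_zero
    intro h2
    have hev := FiniteField.even_card_of_char_two h2
    rw [hcard] at hev
    omega
  have hV8 : Module.finrank F (Fin 8 → F) = 8 := Module.finrank_fin_fun F
  -- Step 1: a nonzero vector `y` orthogonal to all of `π₁`.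
  have hy : ∃ y : Fin 8 → F, y ≠ 0 ∧ ∀ w ∈ π₁, polarForm ⇑Q y w = 0 := by
    set ψ : (Fin 8 → F) →ₗ[F] (π₁ →ₗ[F] F) :=
      (LinearMap.domRestrict' π₁).comp (QuadraticMap.polarBilin Q) with hψ
    have hker : LinearMap.ker ψ ≠ ⊥ := by
      intro hbot
      have hinj : Function.Injective ψ := LinearMap.ker_eq_bot.mp hbot
      have hle := LinearMap.finrank_le_finrank_of_injective hinj
      rw [hV8, Module.finrank_linearMap_self, hdim1] at hle
      omega
    obtain ⟨y, hymem, hy0⟩ := (Submodule.ne_bot_iff _).mp hker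
    refine ⟨y, hy0, fun w hw => ?_⟩
    have h0 : ψ y = 0 := hymem
    have h1 : ψ y ⟨w, hw⟩ = 0 := by rw [h0]; rfl
    exact h1
  obtain ⟨y, hy0, hyperp⟩ := hy
  have hyπ : y ∉ π₁ := fun h => hy0 (h1nd y h hyperp)
  -- Step 2: a nonzero vector `x₀` in `π₁` with `Q x₀ + Q y ≠ 0`.
  have hx : ∃ x ∈ π₁, x ≠ 0 ∧ Q x + Q y ≠ 0 := by
    by_contra hcon
    push_neg at hcon
    set c : F := -(Q y) with hcdef
    have hc : ∀ x ∈ π₁, x ≠ 0 → Q x = c := by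
      intro x hxπ hx0
      have h0 := hcon x hxπ hx0
      rw [hcdef]
      linear_combination h0
    have hπ1ne : ∃ x ∈ π₁, x ≠ 0 := by
      by_contra h
      push_neg at h
      have hbot : π₁ = ⊥ := by
        ext x
        simp only [Submodule.mem_bot]
        exact ⟨fun hx => h x hx, fun hx => hx ▸ π₁.zero_mem⟩
      rw [hbot, finrank_bot] at hdim1
      omega
    obtain ⟨x₁, hx₁π, hx₁0⟩ := hπ1ne
    have hx₁Q : Q x₁ = c := hc x₁ hx₁π hx₁0
    have hc0 : c ≠ 0 := by
      intro h0
      have hTS : TotallySingular ⇑Q π₁ := by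
        intro u hu
        by_cases hu0 : u = 0
        · rw [hu0]; exact map_zero Q
        · rw [hc u hu hu0, h0]
      apply hx₁0
      apply h1nd x₁ hx₁π
      intro w hw
      unfold polarForm
      rw [hTS _ (π₁.add_mem hx₁π hw), hTS _ hx₁π, hTS _ hw]
      ring
    -- scaling by 2 gives 3c = 0
    have h2x₁ : (2 : F) • x₁ ≠ 0 := smul_ne_zero h2F hx₁0
    have h4c : Q ((2 : F) • x₁) = c := hc _ (π₁.smul_mem _ hx₁π) h2x₁
    rw [QuadraticMap.map_smul, smul_eq_mul, hx₁Q] at h4c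
    have h3c : (3 : F) * c = 0 := by linear_combination h4c
    -- a second independent vector gives 2c = 0
    obtain ⟨x₂, hx₂π, hx₂sp⟩ : ∃ x ∈ π₁, x ∉ Submodule.span F {x₁} := by
      by_contra h
      push_neg at h
      have hle : π₁ ≤ Submodule.span F {x₁} := h
      have hmono := Submodule.finrank_mono hle
      rw [hdim1, finrank_span_singleton hx₁0] at hmono
      omega
    have hx₂0 : x₂ ≠ 0 := fun h => hx₂sp (h ▸ (Submodule.span F {x₁}).zero_mem)
    have hx₂Q : Q x₂ = c := hc _ hx₂π hx₂0
    have hadd0 : x₁ + x₂ ≠ 0 := by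
      intro h
      apply hx₂sp
      have : x₂ = -x₁ := by
        rw [eq_neg_iff_add_eq_zero, add_comm]
        exact h
      rw [this]
      exact (Submodule.span F {x₁}).neg_mem (Submodule.mem_span_singleton_self x₁)
    have hsub0 : x₁ - x₂ ≠ 0 := by
      intro h
      apply hx₂sp
      have : x₂ = x₁ := (sub_eq_zero.mp h).symm
      rw [this]
      exact Submodule.mem_span_singleton_self x₁
    have hQp : Q (x₁ + x₂) = c := hc _ (π₁.add_mem hx₁π hx₂π) hadd0
    have hQm : Q (x₁ - x₂) = c := hc _ (π₁.sub_mem hx₁π hx₂π) hsub0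
    have hBp : polarForm ⇑Q x₁ x₂ = -c := by
      unfold polarForm
      rw [hQp, hx₁Q, hx₂Q]
      ring
    have hBm : polarForm ⇑Q x₁ (-x₂) = -c := by
      unfold polarForm
      rw [← sub_eq_add_neg, hQm, hx₁Q, QuadraticMap.map_neg, hx₂Q]
      ring
    have hBneg : polarForm ⇑Q x₁ (-x₂) = -polarForm ⇑Q x₁ x₂ := by
      rw [polarForm_eq_polar, polarForm_eq_polar, QuadraticMap.polar_neg_right]
    rw [hBm, hBp, neg_neg] at hBneg
    have h2c : (2 : F) * c = 0 := by linear_combination -hBneg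
    apply hc0
    linear_combination h3c - h2c
  obtain ⟨x₀, hx₀π, hx₀0, hx₀Q⟩ := hx
  set v : Fin 8 → F := x₀ + y with hvdef
  have hpx₀y : polarForm ⇑Q x₀ y = 0 := by
    rw [polarForm_comm]
    exact hyperp x₀ hx₀π
  have hQv : Q v ≠ 0 := by
    rw [hvdef, Q_add_expand, hpx₀y, add_zero]
    exact hx₀Q
  have hvπ : v ∉ π₁ := by
    intro h
    apply hyπ
    have : y = v - x₀ := by rw [hvdef]; abel
    rw [this]
    exact π₁.sub_mem h hx₀π
  -- the reflection τ in v
  set L : (Fin 8 → F) →ₗ[F] F := (LinearMap.flip (QuadraticMap.polarBilin Q)) v with hLdef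
  have hL : ∀ x, L x = polarForm ⇑Q x v := fun x => rfl
  set τ : (Fin 8 → F) →ₗ[F] (Fin 8 → F) :=
    LinearMap.id - (Q v)⁻¹ • (L.smulRight v) with hτdef
  have hτ : ∀ x, τ x = x - ((Q v)⁻¹ * polarForm ⇑Q x v) • v := by
    intro x
    rw [hτdef]
    simp only [LinearMap.sub_apply, LinearMap.id_apply, LinearMap.smul_apply,
      LinearMap.smulRight_apply, hL, smul_smul]
  have hQτ : ∀ x, Q (τ x) = Q x := by
    intro x
    rw [hτ x, sub_eq_add_neg, ← neg_smul, Q_add_expand, QuadraticMap.map_smul]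
    simp only [polarForm_eq_polar]
    rw [QuadraticMap.polar_smul_right]
    simp only [smul_eq_mul]
    field_simp
    ring
  have hττ : ∀ x, τ (τ x) = x := by
    intro x
    rw [hτ x, hτ _]
    have hself : polarForm ⇑Q v v = 2 * Q v := by
      unfold polarForm
      have : v + v = (2 : F) • v := by
        rw [two_smul]
      rw [this, QuadraticMap.map_smul, smul_eq_mul]
      ring
    have hBv : polarForm ⇑Q (x - ((Q v)⁻¹ * polarForm ⇑Q x v) • v) v
        = -polarForm ⇑Q x v := by
      rw [polarForm_eq_polar, QuadraticMap.polar_sub_left, QuadraticMap.polar_smul_left,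
        smul_eq_mul, ← polarForm_eq_polar, ← polarForm_eq_polar, hself]
      field_simp
      ring
    rw [hBv]
    rw [mul_neg, neg_smul, sub_neg_eq_add, sub_add_cancel]
  have hfix : ∀ x, polarForm ⇑Q x v = 0 → τ x = x := by
    intro x h
    rw [hτ x, h, mul_zero, zero_smul, sub_zero]
  set e : (Fin 8 → F) ≃ₗ[F] (Fin 8 → F) :=
    LinearEquiv.ofLinear τ τ (LinearMap.ext fun x => hττ x)
      (LinearMap.ext fun x => hττ x) with hedef
  have hecoe : (e : (Fin 8 → F) →ₗ[F] (Fin 8 → F)) = τ := rfl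
  have heτ : ∀ x, e x = τ x := fun x => rfl
  have he : ∀ x, e (e x) = x := fun x => hττ x
  have hQe : ∀ x, Q (e x) = Q x := fun x => hQτ x
  set mape : Submodule F (Fin 8 → F) → Submodule F (Fin 8 → F) :=
    fun P => P.map (e : (Fin 8 → F) →ₗ[F] (Fin 8 → F)) with hmapedef
  have hmm : ∀ P, mape (mape P) = P := map_map_self e he
  have hminj : Function.Injective mape := fun P P' h => by
    rw [← hmm P, h, hmm]
  have hmono : ∀ {P P' : Submodule F (Fin 8 → F)}, mape P ≤ mape P' ↔ P ≤ P' := by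
    intro P P'
    constructor
    · intro h
      have := Submodule.map_mono (f := (e : (Fin 8 → F) →ₗ[F] (Fin 8 → F))) h
      rwa [show Submodule.map _ (mape P) = mape (mape P) from rfl,
        show Submodule.map _ (mape P') = mape (mape P') from rfl, hmm, hmm] at this
    · exact fun h => Submodule.map_mono h
  have hrank : ∀ P, Module.finrank F (mape P) = Module.finrank F P :=
    fun P => LinearEquiv.finrank_map_eq e P
  -- the new section and the new hemisystem
  set π₂ : Submodule F (Fin 8 → F) := mape π₁ with hπ₂def
  set C : Set (Submodule F (Fin 8 → F)) := (QuadricPoints ⇑Q ∩ {p | p ≤ π₁}) \ O₁ with hCdef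
  set O₂ : Set (Submodule F (Fin 8 → F)) := mape '' C with hO₂def
  -- membership facts about points
  have hQPmape : ∀ p ∈ QuadricPoints ⇑Q, mape p ∈ QuadricPoints ⇑Q := by
    rintro p ⟨u, hu0, huQ, rfl⟩
    refine ⟨e u, fun h => hu0 (by simpa using congrArg e.symm h), by rw [hQe]; exact huQ, ?_⟩
    rw [hmapedef]
    simp only [Submodule.map_span, Set.image_singleton, LinearEquiv.coe_coe]
  -- π₂ ≠ π₁
  have hw₀ : ∃ w ∈ π₁, polarForm ⇑Q x₀ w ≠ 0 := by
    by_contra h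
    push_neg at h
    exact hx₀0 (h1nd x₀ hx₀π h)
  obtain ⟨w₀, hw₀π, hw₀B⟩ := hw₀
  have hBvw₀ : polarForm ⇑Q w₀ v ≠ 0 := by
    rw [polarForm_comm, hvdef, polarForm_eq_polar, QuadraticMap.polar_add_left,
      ← polarForm_eq_polar, ← polarForm_eq_polar]
    have hyw₀ : polarForm ⇑Q y w₀ = 0 := hyperp w₀ hw₀π
    rw [hyw₀, add_zero]
    exact hw₀B
  have hπ₂ne : π₂ ≠ π₁ := by
    intro h
    have hmem : τ w₀ ∈ π₂ := by
      rw [hπ₂def, hmapedef]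
      exact Submodule.mem_map_of_mem (f := (e : (Fin 8 → F) →ₗ[F] (Fin 8 → F))) hw₀π
    rw [h] at hmem
    have hcv : ((Q v)⁻¹ * polarForm ⇑Q w₀ v) • v ∈ π₁ := by
      have : ((Q v)⁻¹ * polarForm ⇑Q w₀ v) • v = w₀ - τ w₀ := by
        rw [hτ w₀]; abel
      rw [this]
      exact π₁.sub_mem hw₀π hmem
    have hcne : (Q v)⁻¹ * polarForm ⇑Q w₀ v ≠ 0 :=
      mul_ne_zero (inv_ne_zero hQv) hBvw₀
    apply hvπ
    have := π₁.smul_mem ((Q v)⁻¹ * polarForm ⇑Q w₀ v)⁻¹ hcv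
    rwa [smul_smul, inv_mul_cancel₀ hcne, one_smul] at this
  -- basic transported properties
  have hdim2 : Module.finrank F π₂ = 6 := by rw [hπ₂def, hrank, hdim1]
  have h2nd : NondegenerateOn ⇑Q π₂ := nondegenerateOn_map Q e hQe he h1nd
  have h2w : HasWittIndexOn ⇑Q π₂ 2 := hasWittIndexOn_map Q e hQe he h1w
  -- generators in π₁ have rank 2 and q+1 quadric points, of which O₁ takes (q+1)/2
  have hgen1rank : ∀ {G' : Submodule F (Fin 8 → F)}, IsGeneratorIn ⇑Q π₁ G' →
      Module.finrank F G' = 2 := by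
    intro G' hG'
    obtain ⟨⟨G₁, hG₁le, hG₁TS, hG₁rk⟩, hπmax⟩ := h1w
    have h1 := hG'.2.2 G₁ hG₁le hG₁TS
    have h2 := hπmax G' hG'.1 hG'.2.1
    omega
  have hCcount : ∀ {G' : Submodule F (Fin 8 → F)}, IsGeneratorIn ⇑Q π₁ G' →
      (C ∩ {p | p ≤ G'}).ncard = (q + 1) / 2 := by
    intro G' hG'
    have hG'le : G' ≤ π₁ := hG'.1
    have hCset : C ∩ {p | p ≤ G'}
        = (QuadricPoints ⇑Q ∩ {p | p ≤ G'}) \ (O₁ ∩ {p | p ≤ G'}) := by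
      ext p
      simp only [hCdef, Set.mem_inter_iff, Set.mem_diff, Set.mem_setOf_eq]
      constructor
      · rintro ⟨⟨⟨hQP, hpπ⟩, hpO⟩, hpG⟩
        exact ⟨⟨hQP, hpG⟩, fun h => hpO h.1⟩
      · rintro ⟨⟨hQP, hpG⟩, hpO⟩
        exact ⟨⟨⟨hQP, le_trans hpG hG'le⟩, fun h => hpO ⟨h, hpG⟩⟩, hpG⟩
    have hsub : O₁ ∩ {p | p ≤ G'} ⊆ QuadricPoints ⇑Q ∩ {p | p ≤ G'} :=
      Set.inter_subset_inter_left _ hO₁.1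
    have htot : (QuadricPoints ⇑Q ∩ {p | p ≤ G'}).ncard = q + 1 := by
      rw [ncard_quadric_points_in_ts Q G' hG'.2.1 (hgen1rank hG'), hcard]
    have hO₁c : (O₁ ∩ {p | p ≤ G'}).ncard = (q + 1) / 2 := hO₁.2.2 G' hG'
    rw [hCset, Set.ncard_diff hsub, htot, hO₁c]
    omega
  -- O₂ is a hemisystem of π₂
  have hO₂QP : O₂ ⊆ QuadricPoints ⇑Q := by
    rintro p ⟨p', hp', rfl⟩
    exact hQPmape p' hp'.1.1
  have hO₂le : ∀ p ∈ O₂, p ≤ π₂ := by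
    rintro p ⟨p', hp', rfl⟩
    rw [hπ₂def]
    exact hmono.mpr hp'.1.2
  have hO₂ovoid : IsMOvoidIn ⇑Q π₂ ((q + 1) / 2) O₂ := by
    refine ⟨hO₂QP, hO₂le, ?_⟩
    intro G hGgen
    have hG' : IsGeneratorIn ⇑Q π₁ (mape G) := by
      have := isGeneratorIn_map Q e hQe he hGgen
      rwa [show Submodule.map _ π₂ = mape (mape π₁) from rfl, hmm] at this
    have hset : O₂ ∩ {p | p ≤ G} = mape '' (C ∩ {p | p ≤ mape G}) := by
      ext p
      constructor
      · rintro ⟨⟨p', hp', rfl⟩, hle⟩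
        refine ⟨p', ⟨hp', ?_⟩, rfl⟩
        have : mape p' ≤ mape (mape G) := by rw [hmm]; exact hle
        exact hmono.mp this
      · rintro ⟨p', ⟨hp', hle⟩, rfl⟩
        refine ⟨⟨p', hp', rfl⟩, ?_⟩
        have := hmono.mpr (hle : p' ≤ mape G)
        rwa [hmm] at this
    rw [hset, Set.ncard_image_of_injective _ hminj]
    exact hCcount hG'
  -- disjointness
  have hdisj : Disjoint O₁ O₂ := by
    rw [Set.disjoint_left]
    rintro p hpO₁ ⟨p', hp', rfl⟩
    obtain ⟨⟨hQP, hp'π⟩, hp'O⟩ := hp'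
    obtain ⟨u, hu0, huQ, rfl⟩ := hQP
    have huπ : u ∈ π₁ := (Submodule.span_singleton_le_iff_mem _ _).mp hp'π
    have hmapespan : (Submodule.span F {u}).map (e : (Fin 8 → F) →ₗ[F] (Fin 8 → F))
        = Submodule.span F {e u} := by
      simp only [Submodule.map_span, Set.image_singleton, LinearEquiv.coe_coe]
    have hmapele : (Submodule.span F {u}).map (e : (Fin 8 → F) →ₗ[F] (Fin 8 → F)) ≤ π₁ :=
      hO₁.2.1 _ hpO₁
    have heuπ : e u ∈ π₁ := by
      rw [hmapespan] at hmapele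
      exact (Submodule.span_singleton_le_iff_mem _ _).mp hmapele
    have hcv : ((Q v)⁻¹ * polarForm ⇑Q u v) • v ∈ π₁ := by
      have h1 : ((Q v)⁻¹ * polarForm ⇑Q u v) • v = u - τ u := by
        rw [hτ u]; abel
      rw [h1]
      exact π₁.sub_mem huπ (by rw [← heτ u]; exact heuπ)
    have hc0 : (Q v)⁻¹ * polarForm ⇑Q u v = 0 := by
      by_contra hc
      apply hvπ
      have := π₁.smul_mem ((Q v)⁻¹ * polarForm ⇑Q u v)⁻¹ hcv
      rwa [smul_smul, inv_mul_cancel₀ hc, one_smul] at this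
    have hτu : τ u = u := by
      rw [hτ u, hc0, zero_smul, sub_zero]
    apply hp'O
    have hEq : (Submodule.span F {u}).map (e : (Fin 8 → F) →ₗ[F] (Fin 8 → F))
        = Submodule.span F {u} := by
      rw [hmapespan, heτ u, hτu]
    simp only [hmapedef] at hpO₁
    rwa [hEq] at hpO₁
  -- the union is a (q+1)-ovoid
  have hunion : IsMOvoid ⇑Q (q + 1) (O₁ ∪ O₂) := by
    constructor
    · intro p hp
      rcases hp with hp | hp
      · exact hO₁.1 hp
      · exact hO₂QP hp
    · intro G hG
      have hgi1 : IsGeneratorIn ⇑Q π₁ (G ⊓ π₁) :=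
        generator_inf hV8 Q hQw π₁ hdim1 h1w hG
      have hgi2 : IsGeneratorIn ⇑Q π₂ (G ⊓ π₂) :=
        generator_inf hV8 Q hQw π₂ hdim2 h2w hG
      have hc1 : (O₁ ∩ {p | p ≤ G}).ncard = (q + 1) / 2 := ovoid_count hO₁ hgi1
      have hc2 : (O₂ ∩ {p | p ≤ G}).ncard = (q + 1) / 2 := ovoid_count hO₂ovoid hgi2
      have hsplit : (O₁ ∪ O₂) ∩ {p | p ≤ G}
          = (O₁ ∩ {p | p ≤ G}) ∪ (O₂ ∩ {p | p ≤ G}) := Set.union_inter_distrib_right ..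
      rw [hsplit, Set.ncard_union_eq
        (hdisj.mono Set.inter_subset_left Set.inter_subset_left), hc1, hc2]
      omega
  exact ⟨π₂, O₂, hπ₂ne, hdim2, h2nd, h2w, hO₂ovoid, hdisj, hunion⟩
end

section
/- Let q = 3^h with h odd, and let 𝔽_q be the field with q elements (of characteristic 3). Let Q be the quadratic form on 𝔽_q^6 given by Q(X₀,…,X₅) = X₀X₅ + X₁X₄ + X₂X₃, whose quadric is a hyperbolic quadric Q⁺(5,q). Then the set 𝒪 = { ⟨(1, x, y, x+y, x+2y, −y(x+y) − x(x+2y))⟩ : x, y ∈ 𝔽_q } ∪ { ⟨(0,0,0,0,0,1)⟩ } of q²+1 projective points is an ovoid of the quadric of Q: every generator (3-dimensional totally singular subspace) contains exactly one point of 𝒪. -/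
open Module Set

/-- The quadratic form `X₀X₅ + X₁X₄ + X₂X₃` of the hyperbolic quadric `Q⁺(5,q)`. -/
def hypQuadric (F : Type) [Field F] : (Fin 6 → F) → F :=
  fun v => v 0 * v 5 + v 1 * v 4 + v 2 * v 3

/-- The point set `𝒪(f₁,f₂)` with `f₁(x,y) = x+y` and `f₂(x,y) = x+2y`. -/
def segreOvoid (F : Type) [Field F] : Set (Submodule F (Fin 6 → F)) :=
  {p | ∃ x y : F,
      p = Submodule.span F
        {![1, x, y, x + y, x + 2 * y, -(y * (x + y)) - x * (x + 2 * y)]}} ∪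
    {Submodule.span F {![0, 0, 0, 0, 0, 1]}}

/-!
The points of `𝒪` are exactly the singular points of the solid
`W : X₃ = X₁ + X₂, X₄ = X₁ + 2X₂`, on which `Q` restricts to `X₀X₅ + N(X₁, X₂)` with
`N(x, y) = x(x + 2y) + y(x + y)`. In characteristic 3, `N = x² + y²`, which is anisotropic
because `-1` is a nonsquare (`q ≡ 3 mod 4`). A plane generator meets the solid `W` (as 3 + 4 > 6)
in a singular vector, which spans a point of `𝒪`. It cannot contain two: for distinct normalized
representatives `u, u'` of points of `𝒪` one has `Q(u + u') = -N(x - x', y - y')` or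
`Q(u + u') = 1`, never `0`.
-/

theorem three_pow_mod_four_of_odd {h : ℕ} (hodd : Odd h) : 3 ^ h % 4 = 3 := by
  obtain ⟨m, rfl⟩ := hodd
  rw [pow_succ, pow_mul, Nat.mul_mod, Nat.pow_mod]
  norm_num

section Anisotropy

variable {F : Type} [Field F]

theorem eq_zero_of_sq_add_sq_eq_zero (hF : ¬IsSquare (-1 : F)) {a b : F}
    (hab : a ^ 2 + b ^ 2 = 0) : a = 0 ∧ b = 0 := by
  have hb : b = 0 := by
    by_contra hb
    exact hF ⟨a / b, by field_simp; linear_combination -hab⟩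
  subst hb
  exact ⟨pow_eq_zero_iff two_ne_zero |>.mp (by simpa using hab), rfl⟩

theorem segre_form_anisotropic (h3 : (3 : F) = 0) (hF : ¬IsSquare (-1 : F)) (x y : F)
    (hxy : x * (x + 2 * y) + y * (x + y) = 0) : x = 0 ∧ y = 0 :=
  eq_zero_of_sq_add_sq_eq_zero hF (by linear_combination hxy - x * y * h3)

end Anisotropy

section FiniteField

variable {F : Type} [Field F] [Fintype F] {h : ℕ}

theorem three_eq_zero_of_card_eq_three_pow (hh : h ≠ 0) (hcard : Fintype.card F = 3 ^ h) :
    (3 : F) = 0 := by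
  have h0 := FiniteField.cast_card_eq_zero F
  rw [hcard] at h0
  push_cast at h0
  exact (pow_eq_zero_iff hh).mp h0

theorem not_isSquare_neg_one_of_card_eq_three_pow (hodd : Odd h)
    (hcard : Fintype.card F = 3 ^ h) : ¬IsSquare (-1 : F) := by
  rw [FiniteField.isSquare_neg_one_iff, hcard, three_pow_mod_four_of_odd hodd]
  exact fun h => h rfl

end FiniteField

namespace SegreOvoid

variable {F : Type} [Field F]

def vec (x y : F) : Fin 6 → F :=
  ![1, x, y, x + y, x + 2 * y, -(y * (x + y)) - x * (x + 2 * y)]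

def representatives (F : Type) [Field F] : Set (Fin 6 → F) :=
  range (Function.uncurry (vec (F := F))) ∪ {![0, 0, 0, 0, 0, 1]}

theorem segreOvoid_eq_image : segreOvoid F = (fun u => F ∙ u) '' representatives F := by
  ext p
  simp only [segreOvoid, representatives, vec, image_union, image_singleton, mem_union,
    mem_ofPred_eq, ← range_comp, mem_range, Function.comp_def, Prod.exists,
    Function.uncurry_apply_pair, mem_singleton_iff]
  grind

theorem hypQuadric_smul (c : F) (v : Fin 6 → F) :
    hypQuadric F (c • v) = c ^ 2 * hypQuadric F v := by
  simp only [hypQuadric, Pi.smul_apply, smul_eq_mul]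
  ring

theorem ne_zero_and_hypQuadric_eq_zero_of_mem {u : Fin 6 → F}
    (hu : u ∈ representatives F) : u ≠ 0 ∧ hypQuadric F u = 0 := by
  rcases hu with ⟨⟨x, y⟩, rfl⟩ | rfl
  · refine ⟨fun h => one_ne_zero (congrFun h 0), ?_⟩
    simp [hypQuadric, vec]
  · refine ⟨fun h => one_ne_zero (congrFun h 5), ?_⟩
    simp [hypQuadric]

theorem hypQuadric_vec_add_vec (x y x' y' : F) :
    hypQuadric F (vec x y + vec x' y') =
      -((x - x') * ((x - x') + 2 * (y - y')) + (y - y') * ((x - x') + (y - y'))) := by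
  simp [hypQuadric, vec]
  ring

theorem hypQuadric_vec_add_e5 (x y : F) :
    hypQuadric F (vec x y + ![0, 0, 0, 0, 0, 1]) = 1 := by
  simp [hypQuadric, vec]
  ring

theorem segreOvoid_subset_quadricPoints : segreOvoid F ⊆ QuadricPoints (hypQuadric F) := by
  rw [segreOvoid_eq_image]
  rintro _ ⟨u, hu, rfl⟩
  obtain ⟨hu0, huQ⟩ := ne_zero_and_hypQuadric_eq_zero_of_mem hu
  exact ⟨u, hu0, huQ, rfl⟩

theorem vec_injective : Function.Injective (Function.uncurry (vec (F := F))) := by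
  rintro ⟨x, y⟩ ⟨x', y'⟩ h
  simp only [Function.uncurry_apply_pair] at h
  exact Prod.ext (by simpa [vec] using congrFun h 1) (by simpa [vec] using congrFun h 2)

theorem ncard_representatives [Finite F] : (representatives F).ncard = Nat.card F ^ 2 + 1 := by
  have he5 : ![0, 0, 0, 0, 0, 1] ∉ range (Function.uncurry (vec (F := F))) := by
    rintro ⟨⟨x, y⟩, h⟩
    simpa [vec] using congrFun h 0
  rw [representatives, ncard_union_eq (disjoint_singleton_right.mpr he5) (finite_range _)
    (finite_singleton _), ncard_range_of_injective vec_injective, ncard_singleton, Nat.card_prod,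
    sq]

variable (hN : ∀ x y : F, x * (x + 2 * y) + y * (x + y) = 0 → x = 0 ∧ y = 0)
include hN

theorem eq_of_hypQuadric_add_eq_zero {u u' : Fin 6 → F} (hu : u ∈ representatives F)
    (hu' : u' ∈ representatives F) (h : hypQuadric F (u + u') = 0) : u = u' := by
  rcases hu with ⟨⟨x, y⟩, rfl⟩ | rfl <;> rcases hu' with ⟨⟨x', y'⟩, rfl⟩ | rfl <;>
    simp only [Function.uncurry_apply_pair] at h ⊢
  · rw [hypQuadric_vec_add_vec, neg_eq_zero] at h
    obtain ⟨hx, hy⟩ := hN _ _ h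
    rw [sub_eq_zero.mp hx, sub_eq_zero.mp hy]
  · exact absurd h (by rw [hypQuadric_vec_add_e5]; exact one_ne_zero)
  · exact absurd h (by rw [add_comm, hypQuadric_vec_add_e5]; exact one_ne_zero)

theorem injOn_span_representatives : InjOn (fun u => F ∙ u) (representatives F) := by
  intro u hu u' hu' hspan
  have hmem : u' ∈ F ∙ u := by
    rw [show F ∙ u = F ∙ u' from hspan]
    exact Submodule.mem_span_singleton_self u'
  obtain ⟨c, rfl⟩ := Submodule.mem_span_singleton.mp hmem
  refine eq_of_hypQuadric_add_eq_zero hN hu hu' ?_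
  rw [← one_smul F u, smul_smul, mul_one, ← add_smul, hypQuadric_smul,
    (ne_zero_and_hypQuadric_eq_zero_of_mem hu).2, mul_zero]

theorem span_mem_segreOvoid {v : Fin 6 → F} (hv : v ≠ 0) (hQ : hypQuadric F v = 0)
    (h3 : v 3 = v 1 + v 2) (h4 : v 4 = v 1 + 2 * v 2) : F ∙ v ∈ segreOvoid F := by
  suffices ∃ c ≠ (0 : F), ∃ u ∈ representatives F, v = c • u by
    obtain ⟨c, hc, u, hu, rfl⟩ := this
    rw [segreOvoid_eq_image]
    exact ⟨u, hu, (Submodule.span_singleton_smul_eq hc.isUnit u).symm⟩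
  have hv5 : v 0 * v 5 = -(v 2 * (v 1 + v 2)) - v 1 * (v 1 + 2 * v 2) := by
    unfold hypQuadric at hQ
    rw [h3, h4] at hQ
    linear_combination hQ
  by_cases h0 : v 0 = 0
  · obtain ⟨h1, h2⟩ := hN (v 1) (v 2) (by rw [h0, zero_mul] at hv5; linear_combination hv5)
    have hv_eq : v = v 5 • ![0, 0, 0, 0, 0, 1] := by
      ext i; fin_cases i <;> simp [h0, h1, h2, h3, h4]
    refine ⟨v 5, fun h5 => hv (by rw [hv_eq, h5, zero_smul]), _, Or.inr rfl, hv_eq⟩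
  · refine ⟨v 0, h0, _, Or.inl ⟨(v 1 / v 0, v 2 / v 0), rfl⟩, ?_⟩
    ext i; fin_cases i <;> simp [vec, h3, h4] <;> field_simp
    linear_combination hv5

theorem ncard_segreOvoid [Finite F] : (segreOvoid F).ncard = Nat.card F ^ 2 + 1 := by
  rw [segreOvoid_eq_image, (injOn_span_representatives hN).ncard_image, ncard_representatives]

theorem exists_mem_segreOvoid_le {G : Submodule F (Fin 6 → F)}
    (hG : TotallySingular (hypQuadric F) G) (hdim : 2 < finrank F G) :
    ∃ p ∈ segreOvoid F, p ≤ G := by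
  let π (i : Fin 6) : (Fin 6 → F) →ₗ[F] F := LinearMap.proj i
  let ℓ : (Fin 6 → F) →ₗ[F] F × F := LinearMap.prod (π 3 - π 1 - π 2) (π 4 - π 1 - (2 : F) • π 2)
  have hker : LinearMap.ker (ℓ ∘ₗ G.subtype) ≠ ⊥ :=
    LinearMap.ker_ne_bot_of_finrank_lt (by rwa [finrank_prod, finrank_self])
  obtain ⟨⟨v, hvG⟩, hv, hv0⟩ := (Submodule.ne_bot_iff _).mp hker
  obtain ⟨h3, h4⟩ : v 3 - v 1 - v 2 = 0 ∧ v 4 - v 1 - 2 * v 2 = 0 := by simpa [ℓ, π] using hv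
  refine ⟨F ∙ v, span_mem_segreOvoid hN (by simpa using hv0) (hG v hvG) ?_ ?_,
    (Submodule.span_singleton_le_iff_mem _ _).mpr hvG⟩
  · linear_combination h3
  · linear_combination h4

theorem eq_of_mem_segreOvoid_of_le {G : Submodule F (Fin 6 → F)}
    (hG : TotallySingular (hypQuadric F) G) {p p' : Submodule F (Fin 6 → F)}
    (hp : p ∈ segreOvoid F) (hp' : p' ∈ segreOvoid F) (hpG : p ≤ G) (hp'G : p' ≤ G) :
    p = p' := by
  rw [segreOvoid_eq_image] at hp hp'
  obtain ⟨u, hu, rfl⟩ := hp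
  obtain ⟨u', hu', rfl⟩ := hp'
  rw [Submodule.span_singleton_le_iff_mem] at hpG hp'G
  rw [eq_of_hypQuadric_add_eq_zero hN hu hu' (hG _ (add_mem hpG hp'G))]

theorem ncard_segreOvoid_inter_le {G : Submodule F (Fin 6 → F)}
    (hG : TotallySingular (hypQuadric F) G) (hdim : 2 < finrank F G) :
    (segreOvoid F ∩ {p | p ≤ G}).ncard = 1 := by
  obtain ⟨p, hp, hpG⟩ := exists_mem_segreOvoid_le hN hG hdim
  exact ncard_eq_one.mpr ⟨p, eq_singleton_iff_unique_mem.mpr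
    ⟨⟨hp, hpG⟩, fun p' ⟨hp', hp'G⟩ => eq_of_mem_segreOvoid_of_le hN hG hp' hp hp'G hpG⟩⟩

end SegreOvoid

/-- For `q = 3^h`, `h` odd, the set `𝒪(f₁,f₂)` with `f₁(x,y) = x+y`, `f₂(x,y) = x+2y`
is a set of `q²+1` projective points forming an ovoid of the hyperbolic quadric
`Q⁺(5,q) : X₀X₅ + X₁X₄ + X₂X₃ = 0`: every generator (3-dimensional totally singular
subspace) contains exactly one of its points. -/
theorem segreOvoid_is_ovoid
    {q h : ℕ} (hodd : Odd h) (hq : q = 3 ^ h)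
    {F : Type} [Field F] [Fintype F] (hcard : Fintype.card F = q) :
    segreOvoid F ⊆ QuadricPoints (hypQuadric F) ∧
    (segreOvoid F).ncard = q ^ 2 + 1 ∧
      ∀ G : Submodule F (Fin 6 → F),
        TotallySingular (hypQuadric F) G → Module.finrank F G = 3 →
          (segreOvoid F ∩ {p | p ≤ G}).ncard = 1 := by
  subst hq
  have hN := segre_form_anisotropic (three_eq_zero_of_card_eq_three_pow hodd.pos.ne' hcard)
    (not_isSquare_neg_one_of_card_eq_three_pow hodd hcard)
  refine ⟨SegreOvoid.segreOvoid_subset_quadricPoints, ?_, fun G hG hdim => ?_⟩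
  · rw [SegreOvoid.ncard_segreOvoid hN, Nat.card_eq_fintype_card, hcard]
  · exact SegreOvoid.ncard_segreOvoid_inter_le hN hG (by omega)
end

section
/- Let q = 3^h with h odd, and let 𝔽_q be the field with q elements (of characteristic 3). Then for all x, y ∈ 𝔽_q we have x⁴ + 2x²y² + y⁴ + x² + 2xy + 2y² + 2 ≠ 0; that is, the plane curve x⁴ + 2x²y² + y⁴ + x² + 2xy + 2y² + 2 = 0 has no 𝔽_q-rational points. -/
/-- In a field where `-1` is not a square, a sum of two squares vanishes only if
both terms vanish. -/
lemma sq_add_sq_eq_zero {F : Type} [Field F] (hns : ¬ IsSquare (-1 : F))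
    (a b : F) (hab : a ^ 2 + b ^ 2 = 0) : a = 0 ∧ b = 0 := by
  by_cases hb : b = 0
  · subst hb
    constructor
    · have : a ^ 2 = 0 := by linear_combination hab
      exact pow_eq_zero_iff (n := 2) (by norm_num) |>.mp this
    · rfl
  · exfalso
    apply hns
    refine ⟨a / b, ?_⟩
    field_simp
    linear_combination -hab

/-- For `q = 3^h` with `h` odd, the plane curve
`x⁴ + 2x²y² + y⁴ + x² + 2xy + 2y² + 2 = 0` has no `𝔽_q`-rational points. -/
theorem curve_has_no_rational_points
    {q h : ℕ} (hodd : Odd h) (hq : q = 3 ^ h)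
    {F : Type} [Field F] [Fintype F] (hcard : Fintype.card F = q) :
    ∀ x y : F,
      x ^ 4 + 2 * x ^ 2 * y ^ 2 + y ^ 4 + x ^ 2 + 2 * x * y + 2 * y ^ 2 + 2 ≠ 0 := by
  -- the characteristic of `F` is 3
  have hp : (ringChar F).Prime := CharP.char_is_prime F (ringChar F)
  obtain ⟨n, -, hcard'⟩ := FiniteField.card F (ringChar F)
  have hp3 : ringChar F = 3 := by
    have hdvd : ringChar F ∣ 3 ^ h := by
      rw [← hq, ← hcard, hcard']
      exact dvd_pow_self _ (by positivity)
    exact (Nat.prime_dvd_prime_iff_eq hp (by norm_num)).mp (hp.dvd_of_dvd_pow hdvd)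
  have h3 : (3 : F) = 0 := by
    have : CharP F 3 := hp3 ▸ ringChar.charP F
    exact CharP.cast_eq_zero F 3
  -- `-1` is not a square since `card F ≡ 3 [MOD 4]`
  have hns : ¬ IsSquare (-1 : F) := by
    rw [FiniteField.isSquare_neg_one_iff]
    simp only [ne_eq, not_not]
    obtain ⟨k, hk⟩ := hodd
    subst hk
    rw [hcard, hq, pow_succ, pow_mul, Nat.mul_mod, Nat.pow_mod]
    norm_num
  intro x y hxy
  -- the curve polynomial factors as a sum of two squares in char 3
  have key : (x ^ 2 - y ^ 2 - 1) ^ 2 + (x * y + 1) ^ 2 = 0 := by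
    linear_combination hxy - (x ^ 2 * y ^ 2 + x ^ 2) * h3
  obtain ⟨hA, hB⟩ := sq_add_sq_eq_zero hns _ _ key
  apply hns
  refine ⟨x ^ 2 + y ^ 2, ?_⟩
  linear_combination -(x ^ 2 - y ^ 2 + 1) * hA - (4 * x * y - 4) * hB - 2 * h3
end

section
/- Let q be a prime power with q ≡ 1 (mod 4), and let α be a non-square element of 𝔽_q^×. For (x,y) ∈ 𝔽_q², let L_{x,y} be the 2-dimensional subspace of 𝔽_q^4 spanned by (1, 0, x, y) and (0, 1, αy, x), and let L_∞ be the 2-dimensional subspace spanned by (0,0,1,0) and (0,0,0,1). Then 𝒮 = { L_{x,y} : (x,y) ∈ 𝔽_q² } ∪ { L_∞ } is a line spread of PG(3,q), i.e. these q²+1 two-dimensional subspaces pairwise intersect trivially and cover 𝔽_q^4; moreover no member of 𝒮 contains exactly one point of the elliptic quadric defined by F(X₀,X₁,X₂,X₃) = X₀X₁ + X₂² − αX₃², so that exactly (q²+1)/2 members of 𝒮 contain exactly two points of this quadric. -/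
open Module Set

/-- The quadratic form `X₀X₁ + X₂² - αX₃²` of the elliptic quadric `Q⁻(3,q)`,
for `α` a non-square. -/
def ellQuadricAlpha (F : Type) [Field F] (α : F) : (Fin 4 → F) → F :=
  fun v => v 0 * v 1 + v 2 ^ 2 - α * v 3 ^ 2

/-- The line `L_{x,y}`, spanned by `(1, 0, x, y)` and `(0, 1, αy, x)`. -/
def lineXYAlpha (F : Type) [Field F] (α x y : F) : Submodule F (Fin 4 → F) :=
  Submodule.span F {![1, 0, x, y], ![0, 1, α * y, x]}

/-- The line `L_∞`, spanned by `(0,0,1,0)` and `(0,0,0,1)`. -/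
def lineInf (F : Type) [Field F] : Submodule F (Fin 4 → F) :=
  Submodule.span F {![0, 0, 1, 0], ![0, 0, 0, 1]}

/-- The Desarguesian spread `𝒮 = { L_{x,y} : x,y ∈ F } ∪ { L_∞ }`. -/
def spreadAlpha (F : Type) [Field F] (α : F) : Set (Submodule F (Fin 4 → F)) :=
  {l | ∃ x y : F, l = lineXYAlpha F α x y} ∪ {lineInf F}

/-!
Writing `z = x + y√α` in `F(√α)`, the line `L_{x,y}` is `{(u, u z)}`, so the lines form the
Desarguesian spread: distinct lines meet trivially because the norm `a² - αb²` is anisotropic.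
On `L_{x,y}` the quadratic form reads `ab + N(z) (a² - αb²)`; away from the point `(1, 0, x, y)`
its zeros are the roots `s` of `N(z) s² + s - α N(z)`, whose discriminant `1 + 4αN(z)²` cannot
vanish since `-α` is a non-square for `q ≡ 1 (mod 4)`. So every spread line meets the quadric in
0 or 2 points; as the spread partitions the `q² + 1` points of the quadric, double counting
gives `(q² + 1) / 2` secants.
-/

section Projective

variable {K V : Type} [Field K] [AddCommGroup V] [Module K V]

theorem finrank_span_pair_eq_two {u w : V} (huw : LinearIndependent K ![u, w]) :
    finrank K (Submodule.span K {u, w}) = 2 := by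
  rw [← Matrix.range_cons_cons_empty u w ![], finrank_span_eq_card huw, Fintype.card_fin]

theorem span_singleton_mem_quadricPoints_iff {Q : V → K}
    (hQ : ∀ (c : K) (v : V), Q (c • v) = c ^ 2 * Q v) {v : V} (hv : v ≠ 0) :
    Submodule.span K {v} ∈ QuadricPoints Q ↔ Q v = 0 := by
  refine ⟨?_, fun h => ⟨v, hv, h, rfl⟩⟩
  rintro ⟨w, -, hw, hvw⟩
  obtain ⟨c, rfl⟩ := Submodule.span_singleton_eq_span_singleton.mp hvw.symm
  rw [Units.smul_def, hQ, hw, mul_zero]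

variable {u w : V}

theorem span_singleton_smul_add_injective (huw : LinearIndependent K ![u, w]) :
    Function.Injective fun s : K => Submodule.span K {s • u + w} := by
  intro s t hst
  obtain ⟨c, hc⟩ := Submodule.span_singleton_eq_span_singleton.mp hst
  rw [Units.smul_def] at hc
  obtain ⟨hs, hc1⟩ := LinearIndependent.pair_iff.mp huw (c * s - t) (c - 1) (by
    linear_combination (norm := module) hc)
  rw [sub_eq_zero] at hs hc1
  rwa [hc1, one_mul] at hs

theorem span_singleton_ne_span_singleton_smul_add (huw : LinearIndependent K ![u, w]) (s : K) :
    Submodule.span K {u} ≠ Submodule.span K {s • u + w} := by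
  intro h
  obtain ⟨c, hc⟩ := Submodule.span_singleton_eq_span_singleton.mp h
  rw [Units.smul_def] at hc
  have := LinearIndependent.pair_iff.mp huw (c - s) (-1) (by
    linear_combination (norm := module) hc)
  exact one_ne_zero (neg_eq_zero.mp this.2)

variable {Q : V → K}

theorem quadricPoints_inter_span_pair (hQ : ∀ (c : K) (v : V), Q (c • v) = c ^ 2 * Q v)
    (huw : LinearIndependent K ![u, w]) :
    QuadricPoints Q ∩ {p | p ≤ Submodule.span K {u, w}} =
      {p | p = Submodule.span K {u} ∧ Q u = 0} ∪
        (fun s : K => Submodule.span K {s • u + w}) '' {s | Q (s • u + w) = 0} := by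
  ext p
  constructor
  · rintro ⟨⟨v, hv, hQv, rfl⟩, hle⟩
    obtain ⟨a, b, rfl⟩ := Submodule.mem_span_pair.mp (hle (Submodule.mem_span_singleton_self v))
    by_cases hb : b = 0
    · subst hb
      have ha : a ≠ 0 := by rintro rfl; simp at hv
      rw [zero_smul, add_zero, hQ, mul_eq_zero, or_iff_right (pow_ne_zero 2 ha)] at hQv
      exact .inl ⟨by rw [zero_smul, add_zero, Submodule.span_singleton_smul_eq (IsUnit.mk0 a ha)],
        hQv⟩
    · have hv' : a • u + b • w = b • ((a / b) • u + w) := by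
        rw [smul_add, smul_smul, mul_div_cancel₀ _ hb]
      rw [hv', hQ, mul_eq_zero, or_iff_right (pow_ne_zero 2 hb)] at hQv
      exact .inr ⟨a / b, hQv, by rw [hv', Submodule.span_singleton_smul_eq (IsUnit.mk0 b hb)]⟩
  · rintro (⟨rfl, hQu⟩ | ⟨s, hs, rfl⟩)
    · have hu : u ≠ 0 := by simpa using huw.ne_zero 0
      exact ⟨(span_singleton_mem_quadricPoints_iff hQ hu).mpr hQu,
        Submodule.span_mono (by simp)⟩
    · have hsuw : s • u + w ≠ 0 := fun h =>
        one_ne_zero (LinearIndependent.pair_iff.mp huw s 1 (by rwa [one_smul])).2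
      exact ⟨(span_singleton_mem_quadricPoints_iff hQ hsuw).mpr hs,
        (Submodule.span_singleton_le_iff_mem _ _).mpr
          (Submodule.mem_span_pair.mpr ⟨s, 1, by rw [one_smul]⟩)⟩

theorem ncard_quadricPoints_inter_span_pair [Finite K] [DecidableEq K]
    (hQ : ∀ (c : K) (v : V), Q (c • v) = c ^ 2 * Q v) (huw : LinearIndependent K ![u, w]) :
    (QuadricPoints Q ∩ {p | p ≤ Submodule.span K {u, w}}).ncard =
      (if Q u = 0 then 1 else 0) + {s : K | Q (s • u + w) = 0}.ncard := by
  have hdisj : Disjoint {p | p = Submodule.span K {u} ∧ Q u = 0}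
      ((fun s : K => Submodule.span K {s • u + w}) '' {s | Q (s • u + w) = 0}) := by
    rw [disjoint_right]
    rintro _ ⟨s, -, rfl⟩ ⟨h, -⟩
    exact span_singleton_ne_span_singleton_smul_add huw s h.symm
  rw [quadricPoints_inter_span_pair hQ huw,
    ncard_union_eq hdisj ((finite_singleton _).subset fun _ hp => hp.1) (toFinite _),
    ncard_image_of_injective _ (span_singleton_smul_add_injective huw)]
  by_cases hu : Q u = 0 <;> simp [hu]

end Projective

theorem ncard_quadratic_eq_zero_eq_zero_or_two {K : Type*} [Field K] [NeZero (2 : K)]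
    {a b c : K} (ha : a ≠ 0) (hd : discrim a b c ≠ 0) :
    {x | a * (x * x) + b * x + c = 0}.ncard = 0 ∨
      {x | a * (x * x) + b * x + c = 0}.ncard = 2 := by
  by_cases hsq : ∃ s, discrim a b c = s * s
  · obtain ⟨s, hs⟩ := hsq
    have hs0 : s ≠ 0 := by rintro rfl; exact hd (by rw [hs, mul_zero])
    have hroots : {x | a * (x * x) + b * x + c = 0} =
        {(-b + s) / (2 * a), (-b - s) / (2 * a)} :=
      Set.ext (quadratic_eq_zero_iff ha hs)
    refine .inr (hroots ▸ ncard_pair fun h => hs0 ?_)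
    rw [div_left_inj' (mul_ne_zero two_ne_zero ha)] at h
    have h2s : 2 * s = 0 := by linear_combination h
    exact (mul_eq_zero.mp h2s).resolve_left two_ne_zero
  · push Not at hsq
    have hroots : {x | a * (x * x) + b * x + c = 0} = ∅ := eq_empty_of_forall_notMem
      (quadratic_ne_zero_of_discrim_ne_sq fun s => by rw [sq]; exact hsq s)
    exact .inl (by rw [hroots, ncard_empty])

theorem ncard_eq_two_mul_ncard_of_existsUnique {α β : Type*} {P : Set α} {S : Set β}
    (hP : P.Finite) (hS : S.Finite) (r : α → β → Prop) (hr : ∀ p ∈ P, ∃! l, l ∈ S ∧ r p l)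
    (h02 : ∀ l ∈ S, (P ∩ {p | r p l}).ncard = 0 ∨ (P ∩ {p | r p l}).ncard = 2) :
    P.ncard = 2 * {l ∈ S | (P ∩ {p | r p l}).ncard = 2}.ncard := by
  classical
  lift P to Finset α using hP
  lift S to Finset β using hS
  have hfiber (l : β) : (↑P ∩ {p | r p l} : Set α) = ↑(P.bipartiteBelow r l) := by
    ext; simp
  simp only [hfiber, ncard_coe_finset] at h02 ⊢
  have hsecants : {l ∈ (S : Set β) | (P.bipartiteBelow r l).card = 2} =
      ↑(S.filter fun l => (P.bipartiteBelow r l).card = 2) := (Finset.coe_filter _ _).symm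
  rw [hsecants, ncard_coe_finset]
  calc P.card = ∑ p ∈ P, (S.bipartiteAbove r p).card := by
        rw [Finset.card_eq_sum_ones]
        refine Finset.sum_congr rfl fun p hp => ?_
        obtain ⟨l, hl, hlu⟩ := hr p hp
        exact (Finset.card_eq_one.mpr ⟨l, Finset.eq_singleton_iff_unique_mem.mpr
          ⟨Finset.mem_filter.mpr hl, fun l' hl' => hlu l' (Finset.mem_filter.mp hl')⟩⟩).symm
    _ = ∑ l ∈ S, (P.bipartiteBelow r l).card :=
        Finset.sum_card_bipartiteAbove_eq_sum_card_bipartiteBelow r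
    _ = ∑ l ∈ S with (P.bipartiteBelow r l).card = 2, 2 := by
        rw [Finset.sum_filter]
        refine Finset.sum_congr rfl fun l hl => ?_
        rcases h02 l hl with h | h <;> simp [h]
    _ = 2 * {l ∈ S | (P.bipartiteBelow r l).card = 2}.card := by
        rw [Finset.sum_const, smul_eq_mul, mul_comm]

theorem existsUnique_span_singleton_le {K V : Type*} [Field K] [AddCommGroup V] [Module K V]
    {S : Set (Submodule K V)} (hdisj : ∀ l₁ ∈ S, ∀ l₂ ∈ S, l₁ ≠ l₂ → l₁ ⊓ l₂ = ⊥)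
    (hcover : ∀ v, ∃ l ∈ S, v ∈ l) {v : V} (hv : v ≠ 0) :
    ∃! l, l ∈ S ∧ Submodule.span K {v} ≤ l := by
  obtain ⟨l, hl, hvl⟩ := hcover v
  refine ⟨l, ⟨hl, (Submodule.span_singleton_le_iff_mem _ _).mpr hvl⟩, ?_⟩
  rintro l' ⟨hl', hvl'⟩
  by_contra hne
  have hv' : v ∈ l' ⊓ l := ⟨(Submodule.span_singleton_le_iff_mem _ _).mp hvl', hvl⟩
  rw [hdisj l' hl' l hl hne, Submodule.mem_bot] at hv'
  exact hv hv'

section Spread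

variable {F : Type} [Field F] {α : F}

theorem eq_zero_of_sq_sub_mul_sq_eq_zero (hα : ¬ IsSquare α) {a b : F}
    (h : a ^ 2 - α * b ^ 2 = 0) : a = 0 ∧ b = 0 := by
  have hb : b = 0 := by
    by_contra hb
    exact hα ⟨a / b, by field_simp; linear_combination -h⟩
  subst hb
  exact ⟨pow_eq_zero_iff two_ne_zero |>.mp (by linear_combination h), rfl⟩

theorem mem_lineXYAlpha_iff {x y : F} {v : Fin 4 → F} :
    v ∈ lineXYAlpha F α x y ↔ v 2 = v 0 * x + v 1 * (α * y) ∧ v 3 = v 0 * y + v 1 * x := by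
  rw [lineXYAlpha, Submodule.mem_span_pair]
  constructor
  · rintro ⟨a, b, rfl⟩
    simp
  · rintro ⟨h2, h3⟩
    refine ⟨v 0, v 1, funext fun i => ?_⟩
    fin_cases i <;> simp [h2, h3]

theorem mem_lineInf_iff {v : Fin 4 → F} : v ∈ lineInf F ↔ v 0 = 0 ∧ v 1 = 0 := by
  rw [lineInf, Submodule.mem_span_pair]
  constructor
  · rintro ⟨a, b, rfl⟩
    simp
  · rintro ⟨h0, h1⟩
    refine ⟨v 2, v 3, funext fun i => ?_⟩
    fin_cases i <;> simp [h0, h1]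

theorem linearIndependent_lineXYAlpha (x y : F) :
    LinearIndependent F ![![1, 0, x, y], ![0, 1, α * y, x]] :=
  LinearIndependent.pair_iff.mpr fun s t h => by
    simpa using And.intro (congrFun h 0) (congrFun h 1)

theorem linearIndependent_lineInf :
    LinearIndependent F ![(![0, 0, 1, 0] : Fin 4 → F), ![0, 0, 0, 1]] :=
  LinearIndependent.pair_iff.mpr fun s t h => by
    simpa using And.intro (congrFun h 2) (congrFun h 3)

theorem finrank_of_mem_spreadAlpha {l : Submodule F (Fin 4 → F)} (hl : l ∈ spreadAlpha F α) :
    finrank F l = 2 := by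
  rcases hl with ⟨x, y, rfl⟩ | rfl
  · exact finrank_span_pair_eq_two (linearIndependent_lineXYAlpha x y)
  · exact finrank_span_pair_eq_two linearIndependent_lineInf

theorem lineXYAlpha_inf_lineXYAlpha (hα : ¬ IsSquare α) {x y x' y' : F}
    (hne : (x, y) ≠ (x', y')) : lineXYAlpha F α x y ⊓ lineXYAlpha F α x' y' = ⊥ := by
  refine eq_bot_iff.mpr fun v ⟨hv, hv'⟩ => ?_
  obtain ⟨h2, h3⟩ := mem_lineXYAlpha_iff.mp hv
  obtain ⟨h2', h3'⟩ := mem_lineXYAlpha_iff.mp hv'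
  have hD : (x - x') ^ 2 - α * (y - y') ^ 2 ≠ 0 := fun h => by
    obtain ⟨hx, hy⟩ := eq_zero_of_sq_sub_mul_sq_eq_zero hα h
    exact hne (by rw [sub_eq_zero.mp hx, sub_eq_zero.mp hy])
  have hv0 : v 0 * ((x - x') ^ 2 - α * (y - y') ^ 2) = 0 := by
    linear_combination (x - x') * (h2' - h2) - α * (y - y') * (h3' - h3)
  have hv1 : v 1 * ((x - x') ^ 2 - α * (y - y') ^ 2) = 0 := by
    linear_combination (x - x') * (h3' - h3) - (y - y') * (h2' - h2)
  rw [mul_eq_zero, or_iff_left hD] at hv0 hv1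
  refine (Submodule.mem_bot F).mpr (funext fun i => ?_)
  fin_cases i <;> simp [hv0, hv1, h2, h3]

theorem lineXYAlpha_inf_lineInf (x y : F) : lineXYAlpha F α x y ⊓ lineInf F = ⊥ := by
  refine eq_bot_iff.mpr fun v ⟨hv, hv'⟩ => ?_
  obtain ⟨h2, h3⟩ := mem_lineXYAlpha_iff.mp hv
  obtain ⟨h0, h1⟩ := mem_lineInf_iff.mp hv'
  refine (Submodule.mem_bot F).mpr (funext fun i => ?_)
  fin_cases i <;> simp [h0, h1, h2, h3]

theorem spreadAlpha_inf_eq_bot (hα : ¬ IsSquare α) :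
    ∀ l₁ ∈ spreadAlpha F α, ∀ l₂ ∈ spreadAlpha F α, l₁ ≠ l₂ → l₁ ⊓ l₂ = ⊥ := by
  rintro _ (⟨x, y, rfl⟩ | rfl) _ (⟨x', y', rfl⟩ | rfl) hne
  · exact lineXYAlpha_inf_lineXYAlpha hα fun h => hne (by simp_all)
  · exact lineXYAlpha_inf_lineInf x y
  · exact inf_comm (lineInf F) _ ▸ lineXYAlpha_inf_lineInf x' y'
  · exact absurd rfl hne

theorem exists_mem_spreadAlpha (hα : ¬ IsSquare α) (v : Fin 4 → F) :
    ∃ l ∈ spreadAlpha F α, v ∈ l := by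
  by_cases h01 : v 0 = 0 ∧ v 1 = 0
  · exact ⟨lineInf F, .inr rfl, mem_lineInf_iff.mpr h01⟩
  set N := v 0 ^ 2 - α * v 1 ^ 2 with hNdef
  have hN : N ≠ 0 := fun h => h01 (eq_zero_of_sq_sub_mul_sq_eq_zero hα h)
  refine ⟨_, .inl ⟨(v 0 * v 2 - α * v 1 * v 3) / N, (v 0 * v 3 - v 1 * v 2) / N, rfl⟩,
    mem_lineXYAlpha_iff.mpr ⟨?_, ?_⟩⟩ <;>
  · field_simp
    rw [hNdef]
    ring

theorem lineXYAlpha_injective :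
    Function.Injective fun p : F × F => lineXYAlpha F α p.1 p.2 := by
  rintro ⟨x, y⟩ ⟨x', y'⟩ (h : lineXYAlpha F α x y = lineXYAlpha F α x' y')
  have hmem : (![1, 0, x, y] : Fin 4 → F) ∈ lineXYAlpha F α x' y' :=
    h ▸ Submodule.subset_span (by simp)
  simpa using mem_lineXYAlpha_iff.mp hmem

theorem lineInf_notMem_range_lineXYAlpha :
    lineInf F ∉ range fun p : F × F => lineXYAlpha F α p.1 p.2 := by
  rintro ⟨⟨x, y⟩, h⟩
  have hmem : (![1, 0, x, y] : Fin 4 → F) ∈ lineInf F := h ▸ Submodule.subset_span (by simp)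
  simp [mem_lineInf_iff] at hmem

theorem ncard_spreadAlpha [Fintype F] : (spreadAlpha F α).ncard = Fintype.card F ^ 2 + 1 := by
  have hS : spreadAlpha F α =
      insert (lineInf F) (range fun p : F × F => lineXYAlpha F α p.1 p.2) := by
    rw [spreadAlpha, union_singleton]
    simp [Set.range, eq_comm]
  rw [hS, ncard_insert_of_notMem lineInf_notMem_range_lineXYAlpha, ← image_univ,
    ncard_image_of_injective _ lineXYAlpha_injective, ncard_univ, Nat.card_eq_fintype_card,
    Fintype.card_prod, sq]

theorem ellQuadricAlpha_smul (c : F) (v : Fin 4 → F) :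
    ellQuadricAlpha F α (c • v) = c ^ 2 * ellQuadricAlpha F α v := by
  simp only [ellQuadricAlpha, Pi.smul_apply, smul_eq_mul]
  ring

-- Written in the shape `a * (s * s) + b * s + c` of `discrim`.
theorem ellQuadricAlpha_smul_add_lineXYAlpha (x y s : F) :
    ellQuadricAlpha F α (s • ![1, 0, x, y] + ![0, 1, α * y, x]) =
      (x ^ 2 - α * y ^ 2) * (s * s) + 1 * s + -(α * (x ^ 2 - α * y ^ 2)) := by
  simp [ellQuadricAlpha]
  ring

theorem discrim_ne_zero_of_not_isSquare (hsq : IsSquare (-1 : F)) (hα : ¬ IsSquare α) (N : F) :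
    discrim N 1 (-(α * N)) ≠ 0 := by
  intro h
  rw [discrim] at h
  obtain ⟨c, hc⟩ := hsq
  have h2N : 2 * N ≠ 0 := fun h0 =>
    one_ne_zero (by linear_combination h - (2 * α * N) * h0 : (1 : F) = 0)
  refine hα ⟨c / (2 * N), ?_⟩
  rw [div_mul_div_comm, eq_div_iff (mul_ne_zero h2N h2N)]
  linear_combination h + hc

theorem ncard_quadricPoints_inter_lineXYAlpha [Finite F] [NeZero (2 : F)]
    (hsq : IsSquare (-1 : F)) (hα : ¬ IsSquare α) (x y : F) :
    (QuadricPoints (ellQuadricAlpha F α) ∩ {p | p ≤ lineXYAlpha F α x y}).ncard = 0 ∨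
      (QuadricPoints (ellQuadricAlpha F α) ∩ {p | p ≤ lineXYAlpha F α x y}).ncard = 2 := by
  classical
  rw [lineXYAlpha, ncard_quadricPoints_inter_span_pair ellQuadricAlpha_smul
    (linearIndependent_lineXYAlpha x y)]
  simp only [ellQuadricAlpha_smul_add_lineXYAlpha]
  by_cases hN : x ^ 2 - α * y ^ 2 = 0
  · obtain ⟨rfl, rfl⟩ := eq_zero_of_sq_sub_mul_sq_eq_zero hα hN
    simp [ellQuadricAlpha]
  · have hu : ellQuadricAlpha F α ![1, 0, x, y] ≠ 0 := by simpa [ellQuadricAlpha] using hN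
    simpa [if_neg hu] using
      ncard_quadratic_eq_zero_eq_zero_or_two hN (discrim_ne_zero_of_not_isSquare hsq hα _)

theorem ncard_quadricPoints_inter_lineInf [Finite F] (hα : ¬ IsSquare α) :
    (QuadricPoints (ellQuadricAlpha F α) ∩ {p | p ≤ lineInf F}).ncard = 0 := by
  classical
  rw [lineInf, ncard_quadricPoints_inter_span_pair (ellQuadricAlpha_smul (α := α))
    linearIndependent_lineInf]
  have hroots : {s : F | ellQuadricAlpha F α (s • ![0, 0, 1, 0] + ![0, 0, 0, 1]) = 0} = ∅ :=
    eq_empty_of_forall_notMem fun s hs => hα ⟨s, by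
      simp [ellQuadricAlpha] at hs
      linear_combination -hs⟩
  rw [hroots]
  simp [ellQuadricAlpha]

theorem ncard_quadricPoints_inter_of_mem_spreadAlpha [Finite F] [NeZero (2 : F)]
    (hsq : IsSquare (-1 : F)) (hα : ¬ IsSquare α) {l : Submodule F (Fin 4 → F)}
    (hl : l ∈ spreadAlpha F α) :
    (QuadricPoints (ellQuadricAlpha F α) ∩ {p | p ≤ l}).ncard = 0 ∨
      (QuadricPoints (ellQuadricAlpha F α) ∩ {p | p ≤ l}).ncard = 2 := by
  rcases hl with ⟨x, y, rfl⟩ | rfl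
  · exact ncard_quadricPoints_inter_lineXYAlpha hsq hα x y
  · exact .inl (ncard_quadricPoints_inter_lineInf hα)

theorem quadricPoints_ellQuadricAlpha_eq (hα : ¬ IsSquare α) :
    QuadricPoints (ellQuadricAlpha F α) = insert (Submodule.span F {![0, 1, 0, 0]})
      (range fun p : F × F => Submodule.span F {![1, α * p.2 ^ 2 - p.1 ^ 2, p.1, p.2]}) := by
  ext p
  constructor
  · rintro ⟨v, hv, hQ, rfl⟩
    simp only [ellQuadricAlpha] at hQ
    by_cases h0 : v 0 = 0
    · obtain ⟨h2, h3⟩ := eq_zero_of_sq_sub_mul_sq_eq_zero hα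
        (a := v 2) (b := v 3) (by linear_combination hQ - v 1 * h0)
      have hv' : v = v 1 • ![0, 1, 0, 0] := funext fun i => by fin_cases i <;> simp [h0, h2, h3]
      have h1 : v 1 ≠ 0 := fun h1 => hv (by rw [hv', h1, zero_smul])
      exact .inl (by rw [hv', Submodule.span_singleton_smul_eq (IsUnit.mk0 _ h1)])
    · refine .inr ⟨(v 2 / v 0, v 3 / v 0), ?_⟩
      have hv' : v = v 0 • ![1, α * (v 3 / v 0) ^ 2 - (v 2 / v 0) ^ 2, v 2 / v 0, v 3 / v 0] := by
        refine funext fun i => ?_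
        fin_cases i <;> simp <;> field_simp
        linear_combination hQ
      conv_rhs => rw [hv', Submodule.span_singleton_smul_eq (IsUnit.mk0 _ h0)]
  · rintro (rfl | ⟨⟨s, t⟩, rfl⟩)
    · exact ⟨_, fun h => by simpa using congrFun h 1, by simp [ellQuadricAlpha], rfl⟩
    · exact ⟨_, fun h => by simpa using congrFun h 0, by simp [ellQuadricAlpha], rfl⟩

theorem ncard_quadricPoints_ellQuadricAlpha [Fintype F] (hα : ¬ IsSquare α) :
    (QuadricPoints (ellQuadricAlpha F α)).ncard = Fintype.card F ^ 2 + 1 := by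
  have hinj : Function.Injective fun p : F × F =>
      Submodule.span F {(![1, α * p.2 ^ 2 - p.1 ^ 2, p.1, p.2] : Fin 4 → F)} := by
    rintro ⟨s, t⟩ ⟨s', t'⟩ h
    obtain ⟨c, hc⟩ := Submodule.span_singleton_eq_span_singleton.mp h
    have hc1 : (c : F) = 1 := by simpa [Units.smul_def] using congrFun hc 0
    simpa [Units.smul_def, hc1] using And.intro (congrFun hc 2) (congrFun hc 3)
  have hnotMem : Submodule.span F {![0, 1, 0, 0]} ∉ range fun p : F × F =>
      Submodule.span F {(![1, α * p.2 ^ 2 - p.1 ^ 2, p.1, p.2] : Fin 4 → F)} := by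
    rintro ⟨⟨s, t⟩, h⟩
    obtain ⟨c, hc⟩ := Submodule.span_singleton_eq_span_singleton.mp h
    simpa [Units.smul_def] using congrFun hc 0
  rw [quadricPoints_ellQuadricAlpha_eq hα, ncard_insert_of_notMem hnotMem, ← image_univ,
    ncard_image_of_injective _ hinj, ncard_univ, Nat.card_eq_fintype_card, Fintype.card_prod, sq]

end Spread

theorem spreadAlpha_is_spread_without_tangents_general
    {q : ℕ} (hq4 : q % 4 = 1)
    {F : Type} [Field F] [Fintype F] (hcard : Fintype.card F = q)
    (α : F) (hαns : ¬ IsSquare α) :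
    (spreadAlpha F α).ncard = q ^ 2 + 1 ∧
    (∀ l ∈ spreadAlpha F α, Module.finrank F l = 2) ∧
    (∀ l₁ ∈ spreadAlpha F α, ∀ l₂ ∈ spreadAlpha F α, l₁ ≠ l₂ → l₁ ⊓ l₂ = ⊥) ∧
    (∀ v : Fin 4 → F, ∃ l ∈ spreadAlpha F α, v ∈ l) ∧
    (∀ l ∈ spreadAlpha F α,
      (QuadricPoints (ellQuadricAlpha F α) ∩ {p | p ≤ l}).ncard ≠ 1) ∧
    {l ∈ spreadAlpha F α |
        (QuadricPoints (ellQuadricAlpha F α) ∩ {p | p ≤ l}).ncard = 2}.ncard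
      = (q ^ 2 + 1) / 2 := by
  have hsq : IsSquare (-1 : F) := by
    rw [FiniteField.isSquare_neg_one_iff, hcard]
    omega
  have : NeZero (2 : F) :=
    ⟨Ring.two_ne_zero (by rw [ne_eq, FiniteField.even_card_iff_char_two, hcard]; omega)⟩
  have hsecant := fun l (hl : l ∈ spreadAlpha F α) =>
    ncard_quadricPoints_inter_of_mem_spreadAlpha hsq hαns hl
  have hunique : ∀ p ∈ QuadricPoints (ellQuadricAlpha F α), ∃! l, l ∈ spreadAlpha F α ∧ p ≤ l := by
    rintro p ⟨v, hv, -, rfl⟩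
    exact existsUnique_span_singleton_le (spreadAlpha_inf_eq_bot hαns)
      (exists_mem_spreadAlpha hαns) hv
  have hcount := ncard_eq_two_mul_ncard_of_existsUnique (toFinite _) (toFinite _) _
    hunique hsecant
  rw [ncard_quadricPoints_ellQuadricAlpha hαns, hcard] at hcount
  refine ⟨by rw [ncard_spreadAlpha, hcard], fun l => finrank_of_mem_spreadAlpha,
    spreadAlpha_inf_eq_bot hαns, exists_mem_spreadAlpha hαns,
    fun l hl => by rcases hsecant l hl with h | h <;> omega, by omega⟩

/-- For `q ≡ 1 (mod 4)` and `α` a non-square in `𝔽_q^×`, the Desarguesian spread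
`𝒮 = { L_{x,y} } ∪ { L_∞ }` is a line spread of `PG(3,q)` without tangent lines to the
elliptic quadric `X₀X₁ + X₂² - αX₃² = 0`; hence exactly `(q²+1)/2` of its members are
2-secants to this quadric. -/
theorem spreadAlpha_is_spread_without_tangents
    {q : ℕ} (hqpp : IsPrimePow q) (hq4 : q % 4 = 1)
    {F : Type} [Field F] [Fintype F] (hcard : Fintype.card F = q)
    (α : F) (hα0 : α ≠ 0) (hαns : ¬ IsSquare α) :
    (spreadAlpha F α).ncard = q ^ 2 + 1 ∧
    (∀ l ∈ spreadAlpha F α, Module.finrank F l = 2) ∧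
    (∀ l₁ ∈ spreadAlpha F α, ∀ l₂ ∈ spreadAlpha F α, l₁ ≠ l₂ → l₁ ⊓ l₂ = ⊥) ∧
    (∀ v : Fin 4 → F, ∃ l ∈ spreadAlpha F α, v ∈ l) ∧
    (∀ l ∈ spreadAlpha F α,
      (QuadricPoints (ellQuadricAlpha F α) ∩ {p | p ≤ l}).ncard ≠ 1) ∧
    {l ∈ spreadAlpha F α |
        (QuadricPoints (ellQuadricAlpha F α) ∩ {p | p ≤ l}).ncard = 2}.ncard
      = (q ^ 2 + 1) / 2 :=
  spreadAlpha_is_spread_without_tangents_general hq4 hcard α hαns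
end
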